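/- arXiv:1705.08494 — 7 statements merged into one kernel-verified Lean document; each statement's English description precedes it below -/
import Mathlib

section
/- Suppose x : ℝ → ℝ^N is continuously differentiable and x̂ : ℝ → ℝ^N satisfies the delayed gradient flow ẋ(t) = −η∇f(x̂(t)) together with the delay bound ‖x̂(t) − x(t)‖₂ ≤ ∫_{t−c}^{t} ‖ẋ(s)‖₂ ds for all t. Then for all t, (d/dt) f(x(t)) ≤ −(1/(2η))‖ẋ(t)‖₂² + (ηcL²/2)·∫_{t−c}^{t} ‖ẋ(s)‖₂² ds. -/
/-!
Split `⟪∇f(x), ẋ⟫ = ⟪∇f(x) - ∇f(x̂), ẋ⟫ + ⟪∇f(x̂), ẋ⟫`. The flow makes the second term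
`-‖ẋ‖²/η`; the first is at most `L‖x̂ - x‖‖ẋ‖`, which Young's inequality splits into
`‖ẋ‖²/(2η) + (η L²/2)‖x̂ - x‖²`. Finally the delay bound and Cauchy–Schwarz on `[t - c, t]`
give `‖x̂ - x‖² ≤ c ∫ ‖ẋ‖²`.
-/

open MeasureTheory

open scoped RealInnerProductSpace

theorem sq_intervalIntegral_le_mul_intervalIntegral_sq {g : ℝ → ℝ} {a b : ℝ} (hab : a ≤ b)
    (hg : IntervalIntegrable g volume a b)
    (hg2 : IntervalIntegrable (fun s => g s ^ 2) volume a b) :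
    (∫ s in a..b, g s) ^ 2 ≤ (b - a) * ∫ s in a..b, g s ^ 2 := by
  set I := ∫ s in a..b, g s
  set J := ∫ s in a..b, g s ^ 2
  -- integrate `0 ≤ ((b - a) g - I)²`
  have hint : ∫ s in a..b, 2 * (b - a) * I * g s ≤ ∫ s in a..b, ((b - a) ^ 2 * g s ^ 2 + I ^ 2) :=
    intervalIntegral.integral_mono_on hab (hg.const_mul _)
      ((hg2.const_mul _).add intervalIntegrable_const) fun s _ => by
        nlinarith [sq_nonneg ((b - a) * g s - I)]
  rw [intervalIntegral.integral_const_mul,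
    intervalIntegral.integral_add (hg2.const_mul _) intervalIntegrable_const,
    intervalIntegral.integral_const_mul, intervalIntegral.integral_const, smul_eq_mul] at hint
  rcases hab.eq_or_lt with rfl | hlt
  · simp [I]
  · nlinarith [sub_pos.2 hlt]

theorem HasGradientAt.hasDerivAt_comp {F : Type*} [NormedAddCommGroup F] [InnerProductSpace ℝ F]
    [CompleteSpace F] {f : F → ℝ} {f' : F} {x : ℝ → F} {x' : F} {t : ℝ}
    (hf : HasGradientAt f f' (x t)) (hx : HasDerivAt x x' t) :
    HasDerivAt (fun u => f (x u)) ⟪f', x'⟫ t := by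
  simpa [Function.comp_def] using hf.hasFDerivAt.comp_hasDerivAt t hx

theorem real_inner_le_of_eq_neg_smul {F : Type*} [NormedAddCommGroup F] [InnerProductSpace ℝ F]
    {g g' v : F} {η δ : ℝ} (hη : 0 < η) (hv : v = -(η • g')) (hδ : ‖g - g'‖ ≤ δ) :
    ⟪g, v⟫ ≤ -(1 / (2 * η)) * ‖v‖ ^ 2 + η / 2 * δ ^ 2 := by
  have hg'v : ⟪g', v⟫ = -(1 / η) * ‖v‖ ^ 2 := by
    rw [hv, inner_neg_right, real_inner_smul_right, real_inner_self_eq_norm_sq, norm_neg,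
      norm_smul, Real.norm_of_nonneg hη.le]
    field_simp
  have hcross : ⟪g - g', v⟫ ≤ δ * ‖v‖ :=
    (real_inner_le_norm _ _).trans (mul_le_mul_of_nonneg_right hδ (norm_nonneg _))
  have hyoung : δ * ‖v‖ ≤ η / 2 * δ ^ 2 + 1 / (2 * η) * ‖v‖ ^ 2 := by
    have := two_mul_le_add_sq (η * δ) ‖v‖
    field_simp
    nlinarith
  calc ⟪g, v⟫ = ⟪g - g', v⟫ + ⟪g', v⟫ := by rw [inner_sub_left]; ring
    _ ≤ η / 2 * δ ^ 2 + 1 / (2 * η) * ‖v‖ ^ 2 + -(1 / η) * ‖v‖ ^ 2 := by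
      rw [hg'v]; linarith
    _ = -(1 / (2 * η)) * ‖v‖ ^ 2 + η / 2 * δ ^ 2 := by field_simp; ring

theorem continuous_time_descent_general
    (N : ℕ)
    (f : EuclideanSpace ℝ (Fin N) → ℝ)
    (L η c : ℝ) (hη : 0 < η) (hc : 0 < c)
    (hdiff : Differentiable ℝ f)
    (hlip : ∀ y z : EuclideanSpace ℝ (Fin N), ‖gradient f y - gradient f z‖ ≤ L * ‖y - z‖)
    (x xhat : ℝ → EuclideanSpace ℝ (Fin N))
    (hx : ContDiff ℝ 1 x)
    (hode : ∀ t, deriv x t = -(η • gradient f (xhat t)))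
    (hdelay : ∀ t, ‖xhat t - x t‖ ≤ ∫ s in (t - c)..t, ‖deriv x s‖) :
    ∀ t : ℝ,
      deriv (fun u => f (x u)) t
        ≤ -(1 / (2 * η)) * ‖deriv x t‖ ^ 2
          + (η * c * L ^ 2 / 2) * ∫ s in (t - c)..t, ‖deriv x s‖ ^ 2 := by
  intro t
  have hspeed : Continuous fun s => ‖deriv x s‖ := (hx.continuous_deriv le_rfl).norm
  have hlag : ‖xhat t - x t‖ ^ 2 ≤ c * ∫ s in (t - c)..t, ‖deriv x s‖ ^ 2 := by
    have hCS := sq_intervalIntegral_le_mul_intervalIntegral_sq (sub_le_self t hc.le)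
      (hspeed.intervalIntegrable _ _) ((hspeed.pow 2).intervalIntegrable _ _)
    rw [sub_sub_cancel] at hCS
    exact (pow_le_pow_left₀ (norm_nonneg _) (hdelay t) 2).trans hCS
  have hgrad : ‖gradient f (x t) - gradient f (xhat t)‖ ≤ L * ‖xhat t - x t‖ :=
    norm_sub_rev (x t) (xhat t) ▸ hlip _ _
  rw [((hdiff _).hasGradientAt.hasDerivAt_comp
    ((hx.differentiable one_ne_zero t).hasDerivAt)).deriv]
  calc _ ≤ -(1 / (2 * η)) * ‖deriv x t‖ ^ 2 + η / 2 * (L * ‖xhat t - x t‖) ^ 2 :=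
        real_inner_le_of_eq_neg_smul hη (hode t) hgrad
    _ ≤ _ := by
      have := mul_le_mul_of_nonneg_left hlag (by positivity : 0 ≤ η / 2 * L ^ 2)
      linarith

theorem continuous_time_descent
    (N : ℕ) (hN : 0 < N)
    (f : EuclideanSpace ℝ (Fin N) → ℝ)
    (L η c : ℝ) (hL : 0 < L) (hη : 0 < η) (hc : 0 < c)
    (hdiff : Differentiable ℝ f)
    (hlip : ∀ y z : EuclideanSpace ℝ (Fin N), ‖gradient f y - gradient f z‖ ≤ L * ‖y - z‖)
    (x xhat : ℝ → EuclideanSpace ℝ (Fin N))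
    (hx : ContDiff ℝ 1 x)
    (hode : ∀ t, deriv x t = -(η • gradient f (xhat t)))
    (hdelay : ∀ t, ‖xhat t - x t‖ ≤ ∫ s in (t - c)..t, ‖deriv x s‖) :
    ∀ t : ℝ,
      deriv (fun u => f (x u)) t
        ≤ -(1 / (2 * η)) * ‖deriv x t‖ ^ 2
          + (η * c * L ^ 2 / 2) * ∫ s in (t - c)..t, ‖deriv x s‖ ^ 2 :=
  continuous_time_descent_general N f L η c hη hc hdiff hlip x xhat hx hode hdelay
end

section
/- For any positive sequence (ε_l)_{l≥1}, every iteration k satisfies f(x^{k+1}) ≤ f(x^k) + (L/2)·Σ_{l=1}^{∞} ε_l‖Δ^{k−l}‖₂² + (L/2)·(1 + Σ_{l=1}^{j(k)} 1/ε_l − 2/γ_k)·‖Δ^k‖₂². -/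
/-!
The descent lemma for an `L`-smooth `f` gives
`f(x^{k+1}) ≤ f(x^k) + ⟪∇f(x^k), Δ^k⟫ + (L/2)‖Δ^k‖²`. Since `Δ^k` is a multiple of the
`i_k`-th unit vector, `⟪∇f(x̂^k), Δ^k⟫ = -(L/γ_k)‖Δ^k‖²`, and the error
`⟪∇f(x^k) - ∇f(x̂^k), Δ^k⟫` is at most `L‖x^k - x̂^k‖‖Δ^k‖`. Each coordinate of `x^k - x̂^k`
telescopes over at most `j(k)` past steps, so `‖x^k - x̂^k‖ ≤ ∑_{l ≤ j(k)} ‖Δ^{k-l}‖`, and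
Young's inequality with weight `ε_l` splits each product `‖Δ^{k-l}‖‖Δ^k‖`.
-/

open scoped RealInnerProductSpace

theorem image_le_add_inner_gradient_add_sq {F : Type*} [NormedAddCommGroup F]
    [InnerProductSpace ℝ F] [CompleteSpace F] {f : F → ℝ} {L : ℝ} (hf : Differentiable ℝ f)
    (hlip : ∀ y z, ‖gradient f y - gradient f z‖ ≤ L * ‖y - z‖) (a b : F) :
    f b ≤ f a + ⟪gradient f a, b - a⟫ + L / 2 * ‖b - a‖ ^ 2 := by
  set v := b - a
  let g : ℝ → ℝ := fun t ↦ f (a + t • v) - t * ⟪gradient f a, v⟫ - L / 2 * t ^ 2 * ‖v‖ ^ 2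
  have hg : ∀ t, HasDerivAt g
      (⟪gradient f (a + t • v) - gradient f a, v⟫ - L * t * ‖v‖ ^ 2) t := by
    intro t
    have hline : HasDerivAt (fun t : ℝ ↦ a + t • v) v t := by
      simpa using ((hasDerivAt_id t).smul_const v).const_add a
    have hf_line := (hf _).hasGradientAt.hasFDerivAt.comp_hasDerivAt t hline
    rw [InnerProductSpace.toDual_apply_apply] at hf_line
    refine ((hf_line.sub ((hasDerivAt_id t).mul_const ⟪gradient f a, v⟫)).sub
      (((hasDerivAt_pow 2 t).const_mul (L / 2)).mul_const (‖v‖ ^ 2))).congr_deriv ?_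
    rw [inner_sub_left]
    push_cast
    ring
  have hg' : ∀ t ∈ interior (Set.Icc (0 : ℝ) 1),
      ⟪gradient f (a + t • v) - gradient f a, v⟫ - L * t * ‖v‖ ^ 2 ≤ 0 := by
    intro t ht
    rw [interior_Icc] at ht
    calc ⟪gradient f (a + t • v) - gradient f a, v⟫ - L * t * ‖v‖ ^ 2
        ≤ L * ‖t • v‖ * ‖v‖ - L * t * ‖v‖ ^ 2 := by
          gcongr
          refine (real_inner_le_norm _ _).trans ?_
          gcongr
          simpa using hlip (a + t • v) a
      _ = 0 := by rw [norm_smul, Real.norm_of_nonneg ht.1.le]; ring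
  have hanti : AntitoneOn g (Set.Icc 0 1) :=
    antitoneOn_of_hasDerivWithinAt_nonpos (convex_Icc 0 1)
      (fun t _ ↦ (hg t).continuousAt.continuousWithinAt)
      (fun t _ ↦ (hg t).hasDerivWithinAt) hg'
  have := hanti (by simp) (by simp) zero_le_one
  simp only [g, v, zero_smul, add_zero, one_smul, add_sub_cancel] at this
  linarith

theorem norm_sub_le_sum_Icc_norm_sub {E : Type*} [SeminormedAddCommGroup E] (a : ℕ → E)
    {j k : ℕ} (hjk : j ≤ k) :
    ‖a k - a (k - j)‖ ≤ ∑ l ∈ Finset.Icc 1 j, ‖a (k - l + 1) - a (k - l)‖ := by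
  induction j with
  | zero => simp
  | succ j ih =>
    rw [Finset.sum_Icc_succ_top (by omega), show k - (j + 1) + 1 = k - j by omega,
      ← sub_add_sub_cancel (a k) (a (k - j))]
    exact (norm_add_le _ _).trans (add_le_add_left (ih (by omega)) _)

theorem Finset.sum_mul_le_half_sum_weighted_sq {α : Type*} (s : Finset α) (a ε : α → ℝ) (b : ℝ)
    (hε : ∀ l ∈ s, 0 < ε l) :
    (∑ l ∈ s, a l) * b ≤ (∑ l ∈ s, ε l * a l ^ 2 + (∑ l ∈ s, 1 / ε l) * b ^ 2) / 2 := by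
  have hyoung : ∑ l ∈ s, 2 * a l * b ≤ ∑ l ∈ s, (ε l * a l ^ 2 + 1 / ε l * b ^ 2) :=
    Finset.sum_le_sum fun l hl ↦ by rw [one_div]; exact two_mul_le_add_mul_sq (hε l hl)
  rw [Finset.sum_add_distrib, ← Finset.sum_mul, ← Finset.sum_mul, ← Finset.mul_sum] at hyoung
  linarith

namespace EuclideanSpace

variable {ι : Type*} [Fintype ι]

theorem norm_le_sum_norm_of_abs_le {α : Type*} (s : Finset α) {d : EuclideanSpace ℝ ι}
    {v : α → EuclideanSpace ℝ ι} (h : ∀ m, |d m| ≤ ∑ l ∈ s, |v l m|) :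
    ‖d‖ ≤ ∑ l ∈ s, ‖v l‖ := by
  let w : α → EuclideanSpace ℝ ι := fun l ↦ WithLp.toLp 2 fun m ↦ |v l m|
  have hw : ∀ l, ‖w l‖ = ‖v l‖ := fun l ↦ by simp [EuclideanSpace.norm_eq, w]
  calc ‖d‖ ≤ ‖∑ l ∈ s, w l‖ := by
        rw [EuclideanSpace.norm_eq, EuclideanSpace.norm_eq]
        gcongr with m
        simp only [Real.norm_eq_abs, WithLp.ofLp_sum, Finset.sum_apply]
        exact (h m).trans (le_abs_self _)
    _ ≤ ∑ l ∈ s, ‖w l‖ := norm_sum_le _ _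
    _ = ∑ l ∈ s, ‖v l‖ := by simp only [hw]

theorem inner_sub_eq_of_coordinate_step {y y' g : EuclideanSpace ℝ ι} {i : ι}
    {c : ℝ} (hc : c ≠ 0) (hi : y' i = y i - c * g i) (hj : ∀ j ≠ i, y' j = y j) :
    ⟪g, y' - y⟫ = -c⁻¹ * ‖y' - y‖ ^ 2 := by
  classical
  have hsingle : y' - y = EuclideanSpace.single i (-(c * g i)) := by
    ext j
    by_cases hji : j = i
    · subst hji; simp [hi]
    · simp [hj j hji, hji]
  rw [hsingle, EuclideanSpace.inner_single_right, PiLp.norm_single, Real.norm_eq_abs, sq_abs,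
    conj_trivial]
  field_simp

end EuclideanSpace

theorem norm_sub_delayed_le_sum_norm_steps {ι : Type*} [Fintype ι] (x : ℕ → EuclideanSpace ℝ ι)
    {k : ℕ} {j : ι → ℕ} (hj : ∀ i, j i ≤ k) {xhat : EuclideanSpace ℝ ι}
    (hxhat : ∀ i, xhat i = x (k - j i) i) :
    ‖x k - xhat‖ ≤ ∑ l ∈ Finset.Icc 1 (Finset.univ.sup j), ‖x (k - l + 1) - x (k - l)‖ := by
  refine EuclideanSpace.norm_le_sum_norm_of_abs_le _ fun i ↦ ?_
  calc |(x k - xhat) i| ≤ ∑ l ∈ Finset.Icc 1 (j i), |x (k - l + 1) i - x (k - l) i| := by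
        simpa only [PiLp.sub_apply, hxhat, Real.norm_eq_abs]
          using norm_sub_le_sum_Icc_norm_sub (fun n ↦ x n i) (hj i)
    _ ≤ ∑ l ∈ Finset.Icc 1 (Finset.univ.sup j), |(x (k - l + 1) - x (k - l)) i| :=
        Finset.sum_le_sum_of_subset_of_nonneg
          (Finset.Icc_subset_Icc_right (Finset.le_sup (Finset.mem_univ i)))
          fun _ _ _ ↦ abs_nonneg _

theorem descent_general_delays_general
    (N : ℕ)
    (f : EuclideanSpace ℝ (Fin N) → ℝ)
    (L : ℝ) (hL : 0 < L)
    (hdiff : Differentiable ℝ f)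
    (hlip : ∀ y z : EuclideanSpace ℝ (Fin N), ‖gradient f y - gradient f z‖ ≤ L * ‖y - z‖)
    (x : ℕ → EuclideanSpace ℝ (Fin N))
    (ik : ℕ → Fin N)
    (jv : ℕ → Fin N → ℕ)
    (hjk : ∀ k i, jv k i ≤ k)
    (xhat : ℕ → EuclideanSpace ℝ (Fin N))
    (hxhat : ∀ k i, xhat k i = x (k - jv k i) i)
    (γ : ℕ → ℝ) (hγ : ∀ k, 0 < γ k)
    (hupd : ∀ k, x (k+1) (ik k) = x k (ik k) - (γ k / L) * gradient f (xhat k) (ik k))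
    (hfix : ∀ k i, i ≠ ik k → x (k+1) i = x k i)
    (ε : ℕ → ℝ) (hε : ∀ l, 1 ≤ l → 0 < ε l) :
    ∀ k : ℕ,
      f (x (k+1)) ≤ f (x k)
        + (L / 2) * ∑ l ∈ Finset.Icc 1 k, ε l * ‖x (k - l + 1) - x (k - l)‖ ^ 2
        + (L / 2) * (1 + (∑ l ∈ Finset.Icc 1 (Finset.univ.sup (jv k)), 1 / ε l) - 2 / γ k)
            * ‖x (k+1) - x k‖ ^ 2 := by
  intro k
  set Δ := x (k + 1) - x k
  set J := Finset.univ.sup (jv k)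
  have hdescent : f (x (k + 1)) ≤ f (x k) + ⟪gradient f (x k), Δ⟫ + L / 2 * ‖Δ‖ ^ 2 :=
    image_le_add_inner_gradient_add_sq hdiff hlip (x k) (x (k + 1))
  have hstep : ⟪gradient f (xhat k), Δ⟫ = -(L / γ k) * ‖Δ‖ ^ 2 := by
    simpa only [inv_div] using EuclideanSpace.inner_sub_eq_of_coordinate_step
      (div_ne_zero (hγ k).ne' hL.ne') (hupd k) (hfix k)
  have hcross : ⟪gradient f (x k) - gradient f (xhat k), Δ⟫ ≤ L * ‖x k - xhat k‖ * ‖Δ‖ :=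
    (real_inner_le_norm _ _).trans (mul_le_mul_of_nonneg_right (hlip _ _) (norm_nonneg _))
  have hdelay : ‖x k - xhat k‖ * ‖Δ‖
      ≤ (∑ l ∈ Finset.Icc 1 J, ε l * ‖x (k - l + 1) - x (k - l)‖ ^ 2
        + (∑ l ∈ Finset.Icc 1 J, 1 / ε l) * ‖Δ‖ ^ 2) / 2 :=
    (mul_le_mul_of_nonneg_right (norm_sub_delayed_le_sum_norm_steps x (hjk k) (hxhat k))
      (norm_nonneg _)).trans
    (Finset.sum_mul_le_half_sum_weighted_sq _ _ _ _ fun l hl ↦ hε l (Finset.mem_Icc.1 hl).1)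
  have hpast : ∑ l ∈ Finset.Icc 1 J, ε l * ‖x (k - l + 1) - x (k - l)‖ ^ 2
      ≤ ∑ l ∈ Finset.Icc 1 k, ε l * ‖x (k - l + 1) - x (k - l)‖ ^ 2 :=
    Finset.sum_le_sum_of_subset_of_nonneg
      (Finset.Icc_subset_Icc_right (Finset.sup_le fun i _ ↦ hjk k i))
      fun l hl _ ↦ mul_nonneg (hε l (Finset.mem_Icc.1 hl).1).le (sq_nonneg _)
  rw [← sub_add_cancel (gradient f (x k)) (gradient f (xhat k)), inner_add_left, hstep] at hdescent
  linear_combination hdescent + hcross + mul_le_mul_of_nonneg_left hdelay hL.le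
    + mul_le_mul_of_nonneg_left hpast hL.le / 2

theorem descent_general_delays
    (N : ℕ) (hN : 0 < N)
    (f : EuclideanSpace ℝ (Fin N) → ℝ)
    (L : ℝ) (hL : 0 < L)
    (hdiff : Differentiable ℝ f)
    (hlip : ∀ y z : EuclideanSpace ℝ (Fin N), ‖gradient f y - gradient f z‖ ≤ L * ‖y - z‖)
    (fmin : ℝ) (hfmin : ∀ y, fmin ≤ f y)
    (x : ℕ → EuclideanSpace ℝ (Fin N))
    (ik : ℕ → Fin N)
    (jv : ℕ → Fin N → ℕ)
    (hjk : ∀ k i, jv k i ≤ k)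
    (xhat : ℕ → EuclideanSpace ℝ (Fin N))
    (hxhat : ∀ k i, xhat k i = x (k - jv k i) i)
    (γ : ℕ → ℝ) (hγ : ∀ k, 0 < γ k)
    (hupd : ∀ k, x (k+1) (ik k) = x k (ik k) - (γ k / L) * gradient f (xhat k) (ik k))
    (hfix : ∀ k i, i ≠ ik k → x (k+1) i = x k i)
    (ε : ℕ → ℝ) (hε : ∀ l, 1 ≤ l → 0 < ε l) :
    ∀ k : ℕ,
      f (x (k+1)) ≤ f (x k)
        + (L / 2) * ∑ l ∈ Finset.Icc 1 k, ε l * ‖x (k - l + 1) - x (k - l)‖ ^ 2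
        + (L / 2) * (1 + (∑ l ∈ Finset.Icc 1 (Finset.univ.sup (jv k)), 1 / ε l) - 2 / γ k)
            * ‖x (k+1) - x k‖ ^ 2 :=
  descent_general_delays_general N f L hL hdiff hlip x ik jv hjk xhat hxhat γ hγ hupd hfix ε hε
end

section
/- For every ε > 0 and every iteration k, one has f(x^{k+1}) − f(x^k) ≤ (L/(2ε))·Σ_{i=k−τ}^{k−1} ‖Δ^i‖₂² + [((τε + 1)L)/2 − L/γ]·‖Δ^k‖₂². -/
/-!
Along the segment from `x^k` to `x^{k+1}`, the `L`-Lipschitz gradient gives the descent bound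
`f(x^{k+1}) ≤ f(x^k) + ⟪∇f(x^k), Δ^k⟫ + L/2 ‖Δ^k‖²`. Since `Δ^k` lives on the single coordinate
`i_k`, the update rule turns `⟪∇f(x̂^k), Δ^k⟫` into `-(L/γ) ‖Δ^k‖²`, and the remaining cross term
`⟪∇f(x^k) - ∇f(x̂^k), Δ^k⟫` is at most `L ‖x^k - x̂^k‖ ‖Δ^k‖`. Each coordinate of `x^k - x̂^k`
telescopes over the last `τ` steps, so `‖x^k - x̂^k‖ ≤ Σ_{l=k-τ}^{k-1} ‖Δ^l‖`, and Young's
inequality `ab ≤ a²/(2ε) + εb²/2` applied to each of the at most `τ` summands finishes the proof.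
-/

open scoped RealInnerProductSpace
open Finset

lemma image_one_le_of_deriv_sub_le_mul {φ φ' : ℝ → ℝ} {M : ℝ}
    (hφ : ∀ t, HasDerivAt φ (φ' t) t)
    (hφ' : ∀ t ∈ Set.Ioo (0 : ℝ) 1, φ' t - φ' 0 ≤ M * t) :
    φ 1 ≤ φ 0 + φ' 0 + M / 2 := by
  set ψ : ℝ → ℝ := fun t => φ t - t * φ' 0 - M / 2 * t ^ 2
  have hψ : ∀ t, HasDerivAt ψ (φ' t - φ' 0 - M * t) t := fun t =>
    (((hφ t).sub ((hasDerivAt_id' t).mul_const (φ' 0))).sub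
      ((hasDerivAt_pow 2 t).const_mul (M / 2))).congr_deriv (by simp; ring)
  have hanti : AntitoneOn ψ (Set.Icc 0 1) := by
    refine antitoneOn_of_deriv_nonpos (convex_Icc 0 1)
      (fun t _ => (hψ t).continuousAt.continuousWithinAt)
      (fun t _ => (hψ t).differentiableAt.differentiableWithinAt) fun t ht => ?_
    rw [interior_Icc] at ht
    rw [(hψ t).deriv]
    linarith [hφ' t ht]
  have := hanti (Set.left_mem_Icc.2 zero_le_one) (Set.right_mem_Icc.2 zero_le_one) zero_le_one
  simp only [ψ] at this
  linarith

lemma descent_lemma {E : Type*} [NormedAddCommGroup E] [InnerProductSpace ℝ E] [CompleteSpace E]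
    {f : E → ℝ} {L : ℝ} (hf : Differentiable ℝ f)
    (hlip : ∀ y z, ‖gradient f y - gradient f z‖ ≤ L * ‖y - z‖) (x y : E) :
    f y ≤ f x + ⟪gradient f x, y - x⟫ + L / 2 * ‖y - x‖ ^ 2 := by
  have hline : ∀ t : ℝ, HasDerivAt (fun s : ℝ => f (x + s • (y - x)))
      ⟪gradient f (x + t • (y - x)), y - x⟫ t := fun t => by
    have hc : HasDerivAt (fun s : ℝ => x + s • (y - x)) (y - x) t := by
      simpa using ((hasDerivAt_id t).smul_const (y - x)).const_add x
    exact (hf _).hasGradientAt.hasFDerivAt.comp_hasDerivAt t hc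
  have := image_one_le_of_deriv_sub_le_mul (M := L * ‖y - x‖ ^ 2) hline fun t ht => by
    simp only [zero_smul, add_zero, ← inner_sub_left]
    calc ⟪gradient f (x + t • (y - x)) - gradient f x, y - x⟫
        ≤ ‖gradient f (x + t • (y - x)) - gradient f x‖ * ‖y - x‖ := real_inner_le_norm _ _
      _ ≤ L * ‖t • (y - x)‖ * ‖y - x‖ := by
          gcongr; simpa using hlip (x + t • (y - x)) x
      _ = L * ‖y - x‖ ^ 2 * t := by rw [norm_smul, Real.norm_of_nonneg ht.1.le]; ring
  simp only [zero_smul, add_zero, one_smul, add_sub_cancel] at this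
  linarith

lemma inner_eq_neg_inv_mul_norm_sq_of_coordinate_step {ι : Type*} [Fintype ι]
    {g x x' : EuclideanSpace ℝ ι} {i : ι} {η : ℝ} (hη : η ≠ 0)
    (hi : x' i = x i - η * g i) (hj : ∀ j, j ≠ i → x' j = x j) :
    ⟪g, x' - x⟫ = -η⁻¹ * ‖x' - x‖ ^ 2 := by
  have hzero : ∀ j, j ≠ i → (x' - x) j = 0 := fun j hj' => by simp [hj j hj']
  rw [PiLp.inner_apply, EuclideanSpace.norm_sq_eq,
    sum_eq_single i (fun j _ hj' => by simp [hzero j hj']) (by simp),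
    sum_eq_single i (fun j _ hj' => by simp [hzero j hj']) (by simp)]
  simp only [PiLp.sub_apply, hi, Real.norm_eq_abs, sq_abs, RCLike.inner_apply, conj_trivial]
  field_simp
  ring

lemma EuclideanSpace.norm_le_norm_of_forall_norm_le {ι : Type*} [Fintype ι]
    {v w : EuclideanSpace ℝ ι} (h : ∀ i, ‖v i‖ ≤ ‖w i‖) : ‖v‖ ≤ ‖w‖ := by
  rw [EuclideanSpace.norm_eq, EuclideanSpace.norm_eq]
  gcongr with i
  exact h i

lemma norm_sub_delayed_le_sum_norm_sub {ι : Type*} [Fintype ι]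
    (x : ℕ → EuclideanSpace ℝ ι) {y : EuclideanSpace ℝ ι} {d : ι → ℕ} {τ k : ℕ}
    (hy : ∀ i, y i = x (k - d i) i) (hd : ∀ i, d i ≤ τ) :
    ‖x k - y‖ ≤ ∑ l ∈ Ico (k - τ) k, ‖x (l + 1) - x l‖ := by
  classical
  -- the part of the step `x (l + 1) - x l` not yet seen by the delayed iterate `y`
  set masked : ℕ → EuclideanSpace ℝ ι := fun l =>
    WithLp.toLp 2 fun i => if k - d i ≤ l then x (l + 1) i - x l i else 0
  have hsum : x k - y = ∑ l ∈ Ico (k - τ) k, masked l := by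
    ext i
    have hIco : Ico (k - d i) k = (Ico (k - τ) k).filter (k - d i ≤ ·) := by
      ext l; simp only [mem_filter, mem_Ico]; have := hd i; omega
    simp only [masked, WithLp.ofLp_sum, Finset.sum_apply, PiLp.sub_apply, hy]
    rw [← sum_filter, ← hIco, sum_Ico_sub (fun l => x l i) (Nat.sub_le k (d i))]
  rw [hsum]
  refine (norm_sum_le _ _).trans (sum_le_sum fun l _ => ?_)
  refine EuclideanSpace.norm_le_norm_of_forall_norm_le fun i => ?_
  simp only [masked]
  split_ifs <;> simp

lemma sum_mul_le_sum_sq_add_card_mul_sq {ι : Type*} (s : Finset ι) (a : ι → ℝ) (b : ℝ)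
    {ε : ℝ} (hε : 0 < ε) :
    (∑ l ∈ s, a l) * b ≤ 1 / (2 * ε) * ∑ l ∈ s, a l ^ 2 + s.card * (ε / 2 * b ^ 2) := by
  rw [sum_mul, mul_sum, ← nsmul_eq_mul, ← sum_const, ← sum_add_distrib]
  refine sum_le_sum fun l _ => ?_
  have := two_mul_le_add_sq (a l) (ε * b)
  field_simp
  linarith

theorem fundamental_inequality_bounded_general
    (N : ℕ)
    (f : EuclideanSpace ℝ (Fin N) → ℝ)
    (L : ℝ) (hL : 0 < L)
    (hdiff : Differentiable ℝ f)
    (hlip : ∀ y z : EuclideanSpace ℝ (Fin N), ‖gradient f y - gradient f z‖ ≤ L * ‖y - z‖)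
    (x : ℕ → EuclideanSpace ℝ (Fin N))
    (ik : ℕ → Fin N)
    (jv : ℕ → Fin N → ℕ)
    (xhat : ℕ → EuclideanSpace ℝ (Fin N))
    (hxhat : ∀ k i, xhat k i = x (k - jv k i) i)
    (τ : ℕ) (hbdd : ∀ k i, jv k i ≤ τ)
    (γ : ℝ) (hγ : 0 < γ)
    (hupd : ∀ k, x (k+1) (ik k) = x k (ik k) - (γ / L) * gradient f (xhat k) (ik k))
    (hfix : ∀ k i, i ≠ ik k → x (k+1) i = x k i) :
    ∀ ε : ℝ, 0 < ε → ∀ k : ℕ,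
      f (x (k+1)) - f (x k)
        ≤ (L / (2 * ε)) * ∑ i ∈ Finset.Ico (k - τ) k, ‖x (i+1) - x i‖ ^ 2
          + (((τ : ℝ) * ε + 1) * L / 2 - L / γ) * ‖x (k+1) - x k‖ ^ 2 := by
  intro ε hε k
  set Δ := x (k + 1) - x k
  set S := Ico (k - τ) k
  have hdescent := descent_lemma hdiff hlip (x k) (x (k + 1))
  have hstep : ⟪gradient f (xhat k), Δ⟫ = -(L / γ) * ‖Δ‖ ^ 2 := by
    rw [inner_eq_neg_inv_mul_norm_sq_of_coordinate_step (div_ne_zero hγ.ne' hL.ne') (hupd k)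
      (hfix k), inv_div]
  have hcross : ⟪gradient f (x k) - gradient f (xhat k), Δ⟫
      ≤ L * ((∑ l ∈ S, ‖x (l + 1) - x l‖) * ‖Δ‖) :=
    calc _ ≤ ‖gradient f (x k) - gradient f (xhat k)‖ * ‖Δ‖ := real_inner_le_norm _ _
      _ ≤ L * ‖x k - xhat k‖ * ‖Δ‖ := by gcongr; exact hlip _ _
      _ ≤ _ := by
          rw [mul_assoc]
          gcongr
          exact norm_sub_delayed_le_sum_norm_sub x (hxhat k) (hbdd k)
  have hcard : (S.card : ℝ) ≤ τ := by
    exact_mod_cast (Nat.card_Ico _ _).trans_le (by omega)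
  calc f (x (k + 1)) - f (x k)
      ≤ ⟪gradient f (xhat k), Δ⟫ + ⟪gradient f (x k) - gradient f (xhat k), Δ⟫
        + L / 2 * ‖Δ‖ ^ 2 := by rw [inner_sub_left]; linarith
    _ ≤ -(L / γ) * ‖Δ‖ ^ 2
        + L * (1 / (2 * ε) * ∑ l ∈ S, ‖x (l + 1) - x l‖ ^ 2 + τ * (ε / 2 * ‖Δ‖ ^ 2))
        + L / 2 * ‖Δ‖ ^ 2 := by
      rw [hstep]
      gcongr
      refine hcross.trans (mul_le_mul_of_nonneg_left ?_ hL.le)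
      refine (sum_mul_le_sum_sq_add_card_mul_sq S _ _ hε).trans ?_
      gcongr
    _ = _ := by ring

theorem fundamental_inequality_bounded
    (N : ℕ) (hN : 0 < N)
    (f : EuclideanSpace ℝ (Fin N) → ℝ)
    (L : ℝ) (hL : 0 < L)
    (hdiff : Differentiable ℝ f)
    (hlip : ∀ y z : EuclideanSpace ℝ (Fin N), ‖gradient f y - gradient f z‖ ≤ L * ‖y - z‖)
    (fmin : ℝ) (hfmin : ∀ y, fmin ≤ f y)
    (x : ℕ → EuclideanSpace ℝ (Fin N))
    (ik : ℕ → Fin N)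
    (jv : ℕ → Fin N → ℕ)
    (hjk : ∀ k i, jv k i ≤ k)
    (xhat : ℕ → EuclideanSpace ℝ (Fin N))
    (hxhat : ∀ k i, xhat k i = x (k - jv k i) i)
    (τ : ℕ) (hτ1 : 1 ≤ τ) (hbdd : ∀ k i, jv k i ≤ τ)
    (γ : ℝ) (hγ : 0 < γ)
    (hupd : ∀ k, x (k+1) (ik k) = x k (ik k) - (γ / L) * gradient f (xhat k) (ik k))
    (hfix : ∀ k i, i ≠ ik k → x (k+1) i = x k i) :
    ∀ ε : ℝ, 0 < ε → ∀ k : ℕ,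
      f (x (k+1)) - f (x k)
        ≤ (L / (2 * ε)) * ∑ i ∈ Finset.Ico (k - τ) k, ‖x (i+1) - x i‖ ^ 2
          + (((τ : ℝ) * ε + 1) * L / 2 - L / γ) * ‖x (k+1) - x k‖ ^ 2 :=
  fundamental_inequality_bounded_general N f L hL hdiff hlip x ik jv xhat hxhat τ hbdd γ hγ hupd
    hfix
end

section
/- Every iteration k satisfies the pathwise bound ‖∇_{i_k} f(x^{k−τ})‖₂² ≤ (4L²/γ²)·‖Δ^k‖₂² + 6L²τ·Σ_{i=k−τ}^{k−1} ‖Δ^i‖₂². -/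
open MeasureTheory Filter
open scoped BigOperators

private lemma tele (m n : ℕ) (h : m ≤ n) (f : ℕ → ℝ) :
    ∑ i ∈ Finset.Ico m n, (f (i+1) - f i) = f n - f m := by
  rw [Finset.sum_Ico_eq_sub _ h, Finset.sum_range_sub, Finset.sum_range_sub]
  ring

private lemma coord_le {N : ℕ} (v : EuclideanSpace ℝ (Fin N)) (i : Fin N) :
    ‖v i‖ ^ 2 ≤ ‖v‖ ^ 2 := by
  rw [EuclideanSpace.norm_eq, Real.sq_sqrt (by positivity)]
  exact Finset.single_le_sum (f := fun j => ‖v j‖ ^ 2)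
    (fun j _ => by positivity) (Finset.mem_univ i)

private lemma normsq_eq {N : ℕ} (v : EuclideanSpace ℝ (Fin N)) :
    ‖v‖ ^ 2 = ∑ i, ‖v i‖ ^ 2 := by
  rw [EuclideanSpace.norm_eq, Real.sq_sqrt (by positivity)]

set_option maxHeartbeats 1000000 in
theorem pathwise_gradient_bound
    (N : ℕ) (hN : 0 < N)
    (f : EuclideanSpace ℝ (Fin N) → ℝ)
    (L : ℝ) (hL : 0 < L)
    (hdiff : Differentiable ℝ f)
    (hlip : ∀ y z : EuclideanSpace ℝ (Fin N), ‖gradient f y - gradient f z‖ ≤ L * ‖y - z‖)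
    (fmin : ℝ) (hfmin : ∀ y, fmin ≤ f y)
    (x : ℕ → EuclideanSpace ℝ (Fin N))
    (ik : ℕ → Fin N)
    (jv : ℕ → Fin N → ℕ)
    (hjk : ∀ k i, jv k i ≤ k)
    (xhat : ℕ → EuclideanSpace ℝ (Fin N))
    (hxhat : ∀ k i, xhat k i = x (k - jv k i) i)
    (τ : ℕ) (hτ1 : 1 ≤ τ) (hbdd : ∀ k i, jv k i ≤ τ)
    (γ : ℝ) (hγ : 0 < γ)
    (hupd : ∀ k, x (k+1) (ik k) = x k (ik k) - (γ / L) * gradient f (xhat k) (ik k))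
    (hfix : ∀ k i, i ≠ ik k → x (k+1) i = x k i) :
    ∀ k : ℕ,
      ‖gradient f (x (k - τ)) (ik k)‖ ^ 2
        ≤ (4 * L ^ 2 / γ ^ 2) * ‖x (k+1) - x k‖ ^ 2
          + 6 * L ^ 2 * (τ : ℝ) * ∑ i ∈ Finset.Ico (k - τ) k, ‖x (i+1) - x i‖ ^ 2 := by
  intro k
  set S : ℝ := ∑ i ∈ Finset.Ico (k - τ) k, ‖x (i+1) - x i‖ ^ 2 with hS
  have hSnn : 0 ≤ S := Finset.sum_nonneg (fun i _ => by positivity)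
  -- Step 1: bound on ‖xhat k - x (k-τ)‖^2 ≤ τ * S
  have hD : ‖xhat k - x (k - τ)‖ ^ 2 ≤ (τ : ℝ) * S := by
    rw [normsq_eq]
    have hcoord : ∀ i : Fin N,
        ‖(xhat k - x (k - τ)) i‖ ^ 2
          ≤ (τ : ℝ) * ∑ m ∈ Finset.Ico (k - τ) k, ‖x (m+1) i - x m i‖ ^ 2 := by
      intro i
      have h1 : k - τ ≤ k - jv k i := Nat.sub_le_sub_left (hbdd k i) k
      have h2 : k - jv k i ≤ k := Nat.sub_le _ _
      have htel : (xhat k - x (k - τ)) i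
          = ∑ m ∈ Finset.Ico (k - τ) (k - jv k i), (x (m+1) i - x m i) := by
        rw [tele _ _ h1 (fun m => x m i)]
        simp [hxhat k i]
      have hb1 : ‖(xhat k - x (k - τ)) i‖
          ≤ ∑ m ∈ Finset.Ico (k - τ) k, ‖x (m+1) i - x m i‖ := by
        rw [htel]
        calc ‖∑ m ∈ Finset.Ico (k - τ) (k - jv k i), (x (m+1) i - x m i)‖
            ≤ ∑ m ∈ Finset.Ico (k - τ) (k - jv k i), ‖x (m+1) i - x m i‖ :=
              norm_sum_le _ _
          _ ≤ ∑ m ∈ Finset.Ico (k - τ) k, ‖x (m+1) i - x m i‖ :=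
              Finset.sum_le_sum_of_subset_of_nonneg
                (Finset.Ico_subset_Ico le_rfl h2) (fun m _ _ => norm_nonneg _)
      calc ‖(xhat k - x (k - τ)) i‖ ^ 2
          ≤ (∑ m ∈ Finset.Ico (k - τ) k, ‖x (m+1) i - x m i‖) ^ 2 := by
            apply pow_le_pow_left₀ (norm_nonneg _) hb1
        _ ≤ (Finset.Ico (k - τ) k).card
              * ∑ m ∈ Finset.Ico (k - τ) k, ‖x (m+1) i - x m i‖ ^ 2 :=
            sq_sum_le_card_mul_sum_sq
        _ ≤ (τ : ℝ) * ∑ m ∈ Finset.Ico (k - τ) k, ‖x (m+1) i - x m i‖ ^ 2 := by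
            apply mul_le_mul_of_nonneg_right _
              (Finset.sum_nonneg (fun m _ => by positivity))
            rw [Nat.card_Ico]
            have hcard : k - (k - τ) ≤ τ := by omega
            exact_mod_cast hcard
      done
    calc ∑ i, ‖(xhat k - x (k - τ)) i‖ ^ 2
        ≤ ∑ i, (τ : ℝ) * ∑ m ∈ Finset.Ico (k - τ) k, ‖x (m+1) i - x m i‖ ^ 2 :=
          Finset.sum_le_sum (fun i _ => hcoord i)
      _ = (τ : ℝ) * S := by
          rw [← Finset.mul_sum, Finset.sum_comm]
          congr 1
          apply Finset.sum_congr rfl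
          intro m _
          rw [normsq_eq]
          apply Finset.sum_congr rfl
          intro i _
          simp
  -- Step 2: value of gradient at xhat in coordinate ik k
  have hgh : ‖gradient f (xhat k) (ik k)‖ ≤ (L / γ) * ‖x (k+1) - x k‖ := by
    have h1 : gradient f (xhat k) (ik k) = (L / γ) * (x k (ik k) - x (k+1) (ik k)) := by
      rw [hupd k]
      field_simp
      ring
    rw [h1, norm_mul]
    have : ‖x k (ik k) - x (k+1) (ik k)‖ ≤ ‖x (k+1) - x k‖ := by
      have := coord_le (x (k+1) - x k) (ik k)
      have h2 : (x (k+1) - x k) (ik k) = x (k+1) (ik k) - x k (ik k) := by simp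
      rw [h2] at this
      have h3 : ‖x k (ik k) - x (k+1) (ik k)‖ = ‖x (k+1) (ik k) - x k (ik k)‖ :=
        norm_sub_rev _ _
      rw [h3]
      nlinarith [norm_nonneg (x (k+1) (ik k) - x k (ik k)), norm_nonneg (x (k+1) - x k)]
    have hLγ : 0 ≤ L / γ := le_of_lt (div_pos hL hγ)
    calc ‖(L/γ : ℝ)‖ * ‖x k (ik k) - x (k+1) (ik k)‖
        = (L/γ) * ‖x k (ik k) - x (k+1) (ik k)‖ := by rw [Real.norm_eq_abs, abs_of_nonneg hLγ]
      _ ≤ (L/γ) * ‖x (k+1) - x k‖ := mul_le_mul_of_nonneg_left this hLγ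
  -- Step 3: Lipschitz bound on gradient difference in coordinate
  have hdiffc : ‖gradient f (x (k - τ)) (ik k) - gradient f (xhat k) (ik k)‖
      ≤ L * ‖x (k - τ) - xhat k‖ := by
    have h1 := coord_le (gradient f (x (k - τ)) - gradient f (xhat k)) (ik k)
    have h2 : (gradient f (x (k - τ)) - gradient f (xhat k)) (ik k)
        = gradient f (x (k - τ)) (ik k) - gradient f (xhat k) (ik k) := by simp
    rw [h2] at h1
    have h3 := hlip (x (k - τ)) (xhat k)
    nlinarith [norm_nonneg (gradient f (x (k - τ)) (ik k) - gradient f (xhat k) (ik k)),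
      norm_nonneg (gradient f (x (k - τ)) - gradient f (xhat k)),
      norm_nonneg (x (k - τ) - xhat k), mul_nonneg hL.le (norm_nonneg (x (k - τ) - xhat k))]
  -- combine
  have htri : ‖gradient f (x (k - τ)) (ik k)‖
      ≤ L * ‖x (k - τ) - xhat k‖ + (L / γ) * ‖x (k+1) - x k‖ := by
    calc ‖gradient f (x (k - τ)) (ik k)‖
        ≤ ‖gradient f (x (k - τ)) (ik k) - gradient f (xhat k) (ik k)‖
            + ‖gradient f (xhat k) (ik k)‖ := by
              have := norm_add_le (gradient f (x (k - τ)) (ik k) - gradient f (xhat k) (ik k))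
                (gradient f (xhat k) (ik k))
              simpa using this
      _ ≤ _ := add_le_add hdiffc hgh
  have hrev : ‖x (k - τ) - xhat k‖ = ‖xhat k - x (k - τ)‖ := norm_sub_rev _ _
  rw [hrev] at htri
  have hsq : ‖gradient f (x (k - τ)) (ik k)‖ ^ 2
      ≤ 2 * L^2 * ‖xhat k - x (k - τ)‖^2 + 2 * (L/γ)^2 * ‖x (k+1) - x k‖^2 := by
    nlinarith [norm_nonneg (gradient f (x (k - τ)) (ik k)),
      norm_nonneg (xhat k - x (k - τ)), norm_nonneg (x (k+1) - x k),
      sq_nonneg (L * ‖xhat k - x (k - τ)‖ - (L/γ) * ‖x (k+1) - x k‖)]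
  have hfin : 2 * L^2 * ‖xhat k - x (k - τ)‖^2 ≤ 2 * L^2 * ((τ:ℝ) * S) := by
    apply mul_le_mul_of_nonneg_left hD (by positivity)
  have h2L : 2 * (L/γ)^2 = 2 * L^2 / γ^2 := by field_simp
  have hΔ : (0:ℝ) ≤ ‖x (k+1) - x k‖^2 := by positivity
  have hτS : (0:ℝ) ≤ (τ:ℝ) * S := mul_nonneg (by positivity) hSnn
  have h6 : 2 * L^2 * ((τ:ℝ) * S) ≤ 6 * L^2 * (τ:ℝ) * S := by
    nlinarith [mul_nonneg (pow_pos hL 2).le hτS]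
  have h4 : 2 * (L/γ)^2 * ‖x (k+1) - x k‖^2 ≤ 4 * L^2 / γ^2 * ‖x (k+1) - x k‖^2 := by
    apply mul_le_mul_of_nonneg_right _ hΔ
    rw [h2L]
    gcongr
    nlinarith [pow_pos hL 2]
  linarith
end

section
/- Assume additionally that f is convex with nonempty argmin, and let x̄^k denote the projection of x^k onto argmin f. Let ε > 0 satisfy ε + 1/ε = 1 + (1/τ)(1/γ − 1/2), set δ := [1 + (ε/(2τ))(1/γ − 1/2 − τ)]·L/(2ε), define the Lyapunov function F_k := f(x^k) + δ·Σ_{i=k−τ}^{k−1} (i − (k − τ) + 1)‖Δ^i‖₂², and set π_k := E(F_k − min f) and S(k,τ) := Σ_{i=k−τ}^{k−1} δ‖Δ^i‖₂². With β := max{8NL²/γ², (12N+2)L²τ + δτ} and α := β / [(L/(4τ))(1/γ − 1/2 − τ)], one has for all k: (π_k)² ≤ α·(π_k − π_{k+1})·(τ·E S(k,τ) + E‖x^k − x̄^k‖₂²). -/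
/-!
Convexity gives `f x - min f ≤ ‖∇f x‖ ‖x - x̄‖`, and the delay part of the Lyapunov function is at
most `τ S(k, τ)`; weighing the two factors by `t` and `1/t` and optimising over `t` yields
`π_k² ≤ (E‖∇f(x^k)‖² + τ E S) (E‖x^k - x̄^k‖² + τ E S)`.

The descent lemma along the coordinate step, with the delay error `‖x^k - x̂^k‖ ≤ Σ ‖Δ^i‖` absorbed
by AM-GM, makes `F_k` decrease by `η (τ ‖Δ^k‖² + Σ_{i=k-τ}^{k-1} ‖Δ^i‖²)`, where
`η = L/(4τ) (1/γ - 1/2 - τ) > 0` is the denominator of `α`. For the gradient, compare `∇f(x^k)` with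
`∇f(x^{k-τ})`: the latter is `χ^{k-τ}`-measurable, so the uniform choice of `i_k` gives
`E‖∇f(x^{k-τ})‖² = N E|∇_{i_k} f(x^{k-τ})|²`, and `|∇_{i_k} f(x̂^k)| = (L/γ) ‖Δ^k‖`. Altogether
`E‖∇f(x^k)‖² + τ E S ≤ β (τ E‖Δ^k‖² + E Σ ‖Δ^i‖²) ≤ α (π_k - π_{k+1})`.
-/

open MeasureTheory Set
open scoped RealInnerProductSpace

section SmoothConvex

variable {E : Type*} [NormedAddCommGroup E] [InnerProductSpace ℝ E] [CompleteSpace E] {f : E → ℝ}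

theorem hasDerivAt_comp_add_smul {x v : E} {t : ℝ} (hf : DifferentiableAt ℝ f (x + t • v)) :
    HasDerivAt (fun s : ℝ => f (x + s • v)) ⟪gradient f (x + t • v), v⟫ t := by
  have hline : HasDerivAt (fun s : ℝ => x + s • v) v t := by
    simpa using ((hasDerivAt_id t).smul_const v).const_add x
  rw [inner_gradient_left]
  exact hf.hasFDerivAt.comp_hasDerivAt t hline

theorem ConvexOn.add_inner_gradient_le (hconv : ConvexOn ℝ univ f) {x : E}
    (hf : DifferentiableAt ℝ f x) (y : E) : f x + ⟪gradient f x, y - x⟫ ≤ f y := by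
  have hline : ConvexOn ℝ univ fun s : ℝ => f (x + s • (y - x)) := by
    simpa [Function.comp_def, AffineMap.lineMap_apply_module', add_comm] using
      hconv.comp_affineMap (AffineMap.lineMap x y)
  have hderiv := hline.le_slope_of_hasDerivAt (mem_univ 0) (mem_univ 1) one_pos
    (hasDerivAt_comp_add_smul (by simpa using hf))
  simp only [slope_def_field, zero_smul, add_zero, one_smul, add_sub_cancel] at hderiv
  linarith

theorem ConvexOn.sub_le_norm_gradient_mul_norm_sub (hconv : ConvexOn ℝ univ f) {x : E}
    (hf : DifferentiableAt ℝ f x) (y : E) : f x - f y ≤ ‖gradient f x‖ * ‖x - y‖ := by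
  have h := hconv.add_inner_gradient_le hf y
  have hcs : ⟪gradient f x, x - y⟫ ≤ ‖gradient f x‖ * ‖x - y‖ := real_inner_le_norm _ _
  rw [← neg_sub x y, inner_neg_right] at h
  linarith

theorem le_add_inner_gradient_add_sq {L : ℝ} (hdiff : Differentiable ℝ f)
    (hlip : ∀ y z, ‖gradient f y - gradient f z‖ ≤ L * ‖y - z‖) (x y : E) :
    f y ≤ f x + ⟪gradient f x, y - x⟫ + L / 2 * ‖y - x‖ ^ 2 := by
  set v := y - x
  set θ : ℝ → ℝ := fun s => f (x + s • v) - s * ⟪gradient f x, v⟫ - L / 2 * s ^ 2 * ‖v‖ ^ 2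
  have hθ : ∀ s, HasDerivAt θ (⟪gradient f (x + s • v) - gradient f x, v⟫ - L * s * ‖v‖ ^ 2) s := by
    intro s
    have := (((hasDerivAt_comp_add_smul (x := x) (v := v) (hdiff _)).sub
      ((hasDerivAt_id s).mul_const ⟪gradient f x, v⟫)).sub
      (((hasDerivAt_pow 2 s).const_mul (L / 2)).mul_const (‖v‖ ^ 2)))
    refine this.congr_deriv ?_
    rw [inner_sub_left]
    ring_nf
  have hanti : AntitoneOn θ (Ici 0) := by
    refine antitoneOn_of_deriv_nonpos (convex_Ici 0)
      (fun s _ => (hθ s).continuousAt.continuousWithinAt)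
      (fun s _ => (hθ s).differentiableAt.differentiableWithinAt) fun s hs => ?_
    rw [interior_Ici, mem_Ioi] at hs
    rw [(hθ s).deriv, sub_nonpos]
    calc ⟪gradient f (x + s • v) - gradient f x, v⟫
        ≤ ‖gradient f (x + s • v) - gradient f x‖ * ‖v‖ := real_inner_le_norm _ _
      _ ≤ L * ‖s • v‖ * ‖v‖ := by
        gcongr
        simpa using hlip (x + s • v) x
      _ = L * s * ‖v‖ ^ 2 := by rw [norm_smul, Real.norm_of_nonneg hs.le]; ring
  have h01 : θ 1 ≤ θ 0 := hanti (mem_Ici.mpr le_rfl) (mem_Ici.mpr zero_le_one) zero_le_one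
  simp only [θ, one_smul, zero_smul, add_zero, add_sub_cancel, v] at h01
  linarith

end SmoothConvex

section EuclideanCoordinates

variable {ι : Type*} [Fintype ι]

theorem EuclideanSpace.norm_le_norm_of_abs_apply_le {x y : EuclideanSpace ℝ ι}
    (h : ∀ i, |x i| ≤ |y i|) : ‖x‖ ≤ ‖y‖ := by
  have hsq : ‖x‖ ^ 2 ≤ ‖y‖ ^ 2 := by
    rw [EuclideanSpace.real_norm_sq_eq, EuclideanSpace.real_norm_sq_eq]
    exact Finset.sum_le_sum fun i _ => sq_le_sq.mpr (h i)
  simpa using sq_le_sq.mp hsq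

theorem EuclideanSpace.norm_le_sum_norm_sub_of_apply_eq {x : ℕ → EuclideanSpace ℝ ι}
    {a b : ι → ℕ} {lo hi : ℕ} (hlo : ∀ i, lo ≤ a i) (hab : ∀ i, a i ≤ b i) (hhi : ∀ i, b i ≤ hi)
    {y : EuclideanSpace ℝ ι} (hy : ∀ i, y i = x (b i) i - x (a i) i) :
    ‖y‖ ≤ ∑ m ∈ Finset.Ico lo hi, ‖x (m + 1) - x m‖ := by
  classical
  set w : ℕ → EuclideanSpace ℝ ι := fun m =>
    WithLp.toLp 2 fun i => if m ∈ Finset.Ico (a i) (b i) then x (m + 1) i - x m i else 0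
  have hsum : y = ∑ m ∈ Finset.Ico lo hi, w m := by
    ext i
    have hsub : Finset.Ico (a i) (b i) ⊆ Finset.Ico lo hi := Finset.Ico_subset_Ico (hlo i) (hhi i)
    simp only [w, WithLp.ofLp_sum, Finset.sum_apply, Finset.sum_ite_mem,
      Finset.inter_eq_right.mpr hsub, Finset.sum_Ico_sub (fun m => x m i) (hab i), hy]
  rw [hsum]
  refine (norm_sum_le _ _).trans (Finset.sum_le_sum fun m _ => ?_)
  refine EuclideanSpace.norm_le_norm_of_abs_apply_le fun i => ?_
  simp only [w, PiLp.sub_apply]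
  split_ifs <;> simp

theorem EuclideanSpace.eq_add_single_sub_of_forall_ne {κ : Type*} [DecidableEq κ]
    {x y : EuclideanSpace ℝ κ} {i : κ}
    (h : ∀ j, j ≠ i → y j = x j) : y = x + EuclideanSpace.single i (y i - x i) := by
  ext j
  by_cases hj : j = i
  · subst hj; simp
  · simp [hj, h j hj]

theorem descent_of_delayed_coordinate_step [DecidableEq ι] {f : EuclideanSpace ℝ ι → ℝ}
    {L γ ρ r : ℝ} (hL : 0 < L) (hγ : 0 < γ) (hρ : 0 < ρ) (hdiff : Differentiable ℝ f)
    (hlip : ∀ y z, ‖gradient f y - gradient f z‖ ≤ L * ‖y - z‖) {x x' z : EuclideanSpace ℝ ι}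
    {i : ι} (hstep : x' = x + EuclideanSpace.single i (-(γ / L) * gradient f z i))
    (hr : ‖x - z‖ ≤ r) :
    f x' + (L / γ - L / 2 - L * ρ / 2) * ‖x' - x‖ ^ 2 ≤ f x + L / (2 * ρ) * r ^ 2 := by
  set d := x' - x
  have hd : d = EuclideanSpace.single i (-(γ / L) * gradient f z i) := by
    simp [d, hstep]
  have hstep_inner : ⟪gradient f z, d⟫ = -(L / γ) * ‖d‖ ^ 2 := by
    rw [hd, EuclideanSpace.inner_single_right, PiLp.norm_single, Real.norm_eq_abs, sq_abs,
      conj_trivial]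
    field_simp
  have hdelay_inner : ⟪gradient f x - gradient f z, d⟫ ≤ L * r * ‖d‖ :=
    calc ⟪gradient f x - gradient f z, d⟫ ≤ ‖gradient f x - gradient f z‖ * ‖d‖ :=
          real_inner_le_norm _ _
      _ ≤ L * r * ‖d‖ := by gcongr; exact (hlip x z).trans (by gcongr)
  have hamgm : L * r * ‖d‖ ≤ L * ρ / 2 * ‖d‖ ^ 2 + L / (2 * ρ) * r ^ 2 := by
    have h := mul_nonneg (div_pos hL (mul_pos two_pos hρ)).le (sq_nonneg (ρ * ‖d‖ - r))
    have hexp : L / (2 * ρ) * (ρ * ‖d‖ - r) ^ 2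
        = L * ρ / 2 * ‖d‖ ^ 2 + L / (2 * ρ) * r ^ 2 - L * r * ‖d‖ := by
      field_simp
      ring
    linarith
  have hsplit : ⟪gradient f x, d⟫ = ⟪gradient f z, d⟫ + ⟪gradient f x - gradient f z, d⟫ := by
    rw [inner_sub_left]; ring
  have := le_add_inner_gradient_add_sq hdiff hlip x x'
  linarith

end EuclideanCoordinates

theorem sq_sum_Ico_sub_le (τ k : ℕ) (a : ℕ → ℝ) :
    (∑ m ∈ Finset.Ico (k - τ) k, a m) ^ 2 ≤ τ * ∑ m ∈ Finset.Ico (k - τ) k, a m ^ 2 := by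
  refine (sq_sum_le_card_mul_sum_sq (s := Finset.Ico (k - τ) k) (f := a)).trans ?_
  gcongr
  rw [Nat.card_Ico]
  omega

theorem sq_le_two_mul_add_sq_of_abs_le {a b c : ℝ} (h : |a| ≤ b + c) :
    a ^ 2 ≤ 2 * (b ^ 2 + c ^ 2) :=
  (sq_le_sq' (by linarith [neg_abs_le a, abs_nonneg a]) ((le_abs_self a).trans h)).trans add_sq_le

theorem sq_le_mul_of_forall_two_mul_le {p a b : ℝ} (hp : 0 ≤ p) (ha : 0 ≤ a) (hb : 0 ≤ b)
    (h : ∀ t > 0, 2 * t * p ≤ t ^ 2 * a + b) : p ^ 2 ≤ a * b := by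
  have hquad : ∀ t, 0 ≤ a * (t * t) + (-2 * p) * t + b := by
    intro t
    rcases lt_or_ge 0 t with ht | ht
    · nlinarith [h t ht]
    · nlinarith [mul_nonneg ha (mul_self_nonneg t), mul_nonpos_of_nonneg_of_nonpos hp ht]
  have hdisc := discrim_le_zero hquad
  rw [discrim] at hdisc
  nlinarith

theorem sq_le_add_mul_add_of_le_add {p F a b T : ℝ} (hp : 0 ≤ p) (hpF : p ≤ F + T) (hT : 0 ≤ T)
    (ha : 0 ≤ a) (hb : 0 ≤ b) (hF : ∀ t > 0, 2 * t * F ≤ t ^ 2 * a + b) :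
    p ^ 2 ≤ (a + T) * (b + T) := by
  refine sq_le_mul_of_forall_two_mul_le hp (by positivity) (by positivity) fun t ht => ?_
  nlinarith [hF t ht, mul_le_mul_of_nonneg_left hpF (by positivity : (0 : ℝ) ≤ 2 * t),
    mul_nonneg hT (sq_nonneg (t - 1))]

-- The delay term `Σ_{i=k-τ}^{k-1} (i - (k-τ) + 1) a_i` of the Lyapunov function `F_k`.
def lyapunovTail (τ k : ℕ) (a : ℕ → ℝ) : ℝ :=
  ∑ i ∈ Finset.Ico (k - τ) k, ((i + τ + 1 - k : ℕ) : ℝ) * a i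

theorem lyapunovTail_succ (τ k : ℕ) (a : ℕ → ℝ) :
    lyapunovTail τ (k + 1) a
      = lyapunovTail τ k a + τ * a k - ∑ i ∈ Finset.Ico (k - τ) k, a i := by
  have hlow : lyapunovTail τ (k + 1) a
      = ∑ i ∈ Finset.Ico (k - τ) (k + 1), ((i + τ + 1 - (k + 1) : ℕ) : ℝ) * a i := by
    refine Finset.sum_subset (Finset.Ico_subset_Ico (by omega) le_rfl) fun i hi hi' => ?_
    simp only [Finset.mem_Ico] at hi hi'
    rw [show i + τ + 1 - (k + 1) = 0 by omega, Nat.cast_zero, zero_mul]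
  rw [hlow, Finset.sum_Ico_succ_top (Nat.sub_le k τ), show k + τ + 1 - (k + 1) = τ by omega]
  have hweight : ∀ i ∈ Finset.Ico (k - τ) k,
      ((i + τ + 1 - (k + 1) : ℕ) : ℝ) * a i = ((i + τ + 1 - k : ℕ) : ℝ) * a i - a i := by
    intro i hi
    rw [Finset.mem_Ico] at hi
    rw [show i + τ + 1 - k = (i + τ + 1 - (k + 1)) + 1 by omega]
    push_cast
    ring
  rw [Finset.sum_congr rfl hweight, Finset.sum_sub_distrib, lyapunovTail]
  ring

theorem lyapunovTail_nonneg (τ k : ℕ) {a : ℕ → ℝ} (ha : ∀ i, 0 ≤ a i) :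
    0 ≤ lyapunovTail τ k a :=
  Finset.sum_nonneg fun i _ => mul_nonneg (Nat.cast_nonneg _) (ha i)

theorem lyapunovTail_le (τ k : ℕ) {a : ℕ → ℝ} (ha : ∀ i, 0 ≤ a i) :
    lyapunovTail τ k a ≤ τ * ∑ i ∈ Finset.Ico (k - τ) k, a i := by
  rw [lyapunovTail, Finset.mul_sum]
  refine Finset.sum_le_sum fun i hi => mul_le_mul_of_nonneg_right ?_ (ha i)
  rw [Finset.mem_Ico] at hi
  exact_mod_cast (by omega : i + τ + 1 - k ≤ τ)

section Integral

variable {Ω : Type*} {m : MeasurableSpace Ω} [mΩ : MeasurableSpace Ω] {μ : Measure Ω}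

theorem integral_mul_add_mul {u v : Ω → ℝ} (hu : Integrable u μ) (hv : Integrable v μ)
    (a b : ℝ) : ∫ ω, (a * u ω + b * v ω) ∂μ = a * ∫ ω, u ω ∂μ + b * ∫ ω, v ω ∂μ := by
  rw [integral_add (hu.const_mul a) (hv.const_mul b), integral_const_mul, integral_const_mul]

theorem setIntegral_eq_inv_mul_integral_of_measure_inter (hm : m ≤ mΩ)
    {B : Set Ω} {n : ℕ} (hB : ∀ A, MeasurableSet[m] A → μ (A ∩ B) = μ A / n) {g : Ω → ℝ}
    (hg : StronglyMeasurable[m] g) : ∫ ω in B, g ω ∂μ = (n : ℝ)⁻¹ * ∫ ω, g ω ∂μ := by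
  have htrim : (μ.restrict B).trim hm = ((n : ENNReal)⁻¹ • μ).trim hm := by
    refine @Measure.ext Ω m _ _ fun s hs => ?_
    rw [trim_measurableSet_eq hm hs, trim_measurableSet_eq hm hs,
      Measure.restrict_apply (hm s hs), hB s hs, Measure.smul_apply, smul_eq_mul,
      ENNReal.div_eq_inv_mul]
  calc ∫ ω in B, g ω ∂μ = ∫ ω, g ω ∂((μ.restrict B).trim hm) := integral_trim hm hg
    _ = ∫ ω, g ω ∂((n : ENNReal)⁻¹ • μ) := by rw [htrim, ← integral_trim hm hg]
    _ = (n : ℝ)⁻¹ * ∫ ω, g ω ∂μ := by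
      rw [integral_smul_measure, smul_eq_mul, ENNReal.toReal_inv, ENNReal.toReal_natCast]

theorem integral_apply_of_uniform_index {ι : Type*} [Fintype ι] [MeasurableSpace ι]
    [MeasurableSingletonClass ι] (hm : m ≤ mΩ) {I : Ω → ι} (hI : Measurable I) {n : ℕ}
    (hunif : ∀ i A, MeasurableSet[m] A → μ (A ∩ {ω | I ω = i}) = μ A / n) {g : Ω → ι → ℝ}
    (hgm : ∀ i, StronglyMeasurable[m] fun ω => g ω i) (hgi : ∀ i, Integrable (fun ω => g ω i) μ) :
    ∫ ω, g ω (I ω) ∂μ = (n : ℝ)⁻¹ * ∑ i, ∫ ω, g ω i ∂μ := by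
  classical
  have hlevel : ∀ i, MeasurableSet {ω | I ω = i} := fun i => hI (measurableSet_singleton i)
  have hsplit : (fun ω => g ω (I ω)) = fun ω => ∑ i, {ω | I ω = i}.indicator (g · i) ω := by
    ext ω
    simp [Set.indicator_apply]
  rw [hsplit, integral_finsetSum _ fun i _ => (hgi i).indicator (hlevel i), Finset.mul_sum]
  refine Finset.sum_congr rfl fun i _ => ?_
  rw [integral_indicator (hlevel i),
    setIntegral_eq_inv_mul_integral_of_measure_inter hm (hunif i) (hgm i)]

theorem integral_le_mul_add_mul_of_le {u v w : Ω → ℝ} (hu : ∀ ω, 0 ≤ u ω)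
    (hv : Integrable v μ) (hw : Integrable w μ) {a b : ℝ} (h : ∀ ω, u ω ≤ a * v ω + b * w ω) :
    ∫ ω, u ω ∂μ ≤ a * ∫ ω, v ω ∂μ + b * ∫ ω, w ω ∂μ :=
  (integral_mono_of_nonneg (ae_of_all _ hu) ((hv.const_mul a).add (hw.const_mul b))
    (ae_of_all _ h)).trans_eq (integral_mul_add_mul hv hw a b)

theorem integral_sq_norm_eq_of_uniform_index {ι : Type*} [Fintype ι] [MeasurableSpace ι]
    [MeasurableSingletonClass ι] (hm : m ≤ mΩ) {I : Ω → ι}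
    (hI : Measurable I) {n : ℕ} (hn : n ≠ 0)
    (hunif : ∀ i A, MeasurableSet[m] A → μ (A ∩ {ω | I ω = i}) = μ A / n)
    {Y : Ω → EuclideanSpace ℝ ι} (hY : Measurable[m] Y)
    (hYi : Integrable (fun ω => ‖Y ω‖ ^ 2) μ) :
    ∫ ω, ‖Y ω‖ ^ 2 ∂μ = n * ∫ ω, Y ω (I ω) ^ 2 ∂μ := by
  have hcoord : ∀ i, Measurable[m] fun ω => Y ω i ^ 2 := fun i =>
    ((PiLp.continuous_apply 2 _ i).measurable.comp hY).pow_const 2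
  have hcoordi : ∀ i, Integrable (fun ω => Y ω i ^ 2) μ := fun i =>
    hYi.mono' ((hcoord i).mono hm le_rfl).aestronglyMeasurable (ae_of_all _ fun ω => by
      rw [Real.norm_of_nonneg (sq_nonneg _), sq_le_sq, abs_norm]
      exact PiLp.norm_apply_le (Y ω) i)
  rw [integral_apply_of_uniform_index hm hI hunif (fun i => (hcoord i).stronglyMeasurable)
    hcoordi, ← integral_finsetSum _ fun i _ => hcoordi i,
    mul_inv_cancel_left₀ (Nat.cast_ne_zero.mpr hn)]
  simp_rw [EuclideanSpace.real_norm_sq_eq]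

theorem integrable_lyapunovTail {a : ℕ → Ω → ℝ} (ha : ∀ i, Integrable (a i) μ) (τ k : ℕ) :
    Integrable (fun ω => lyapunovTail τ k fun i => a i ω) μ :=
  integrable_finsetSum _ fun i _ => (ha i).const_mul _

theorem integral_add_mul_lyapunovTail_le {g : Ω → ℝ} {a : ℕ → Ω → ℝ} (hg : Integrable g μ)
    (ha : ∀ i, Integrable (a i) μ) (ha0 : ∀ i ω, 0 ≤ a i ω) {δ : ℝ} (hδ : 0 ≤ δ) (τ k : ℕ) :
    ∫ ω, (g ω + δ * lyapunovTail τ k fun i => a i ω) ∂μ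
      ≤ ∫ ω, g ω ∂μ + τ * ∫ ω, ∑ i ∈ Finset.Ico (k - τ) k, δ * a i ω ∂μ := by
  have hW := integrable_finsetSum (Finset.Ico (k - τ) k) fun i _ => (ha i).const_mul δ
  rw [← integral_const_mul, ← integral_add hg (hW.const_mul _)]
  refine integral_mono (hg.add ((integrable_lyapunovTail ha τ k).const_mul δ))
    (hg.add (hW.const_mul _)) fun ω => (add_le_add_iff_left _).mpr ?_
  rw [← Finset.mul_sum, mul_left_comm]
  exact mul_le_mul_of_nonneg_left (lyapunovTail_le τ k fun i => ha0 i ω) hδ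

theorem le_integral_add_mul_lyapunovTail [IsProbabilityMeasure μ] {g : Ω → ℝ} {a : ℕ → Ω → ℝ}
    (hg : Integrable g μ) (ha : ∀ i, Integrable (a i) μ) (ha0 : ∀ i ω, 0 ≤ a i ω) {δ : ℝ}
    (hδ : 0 ≤ δ) (τ k : ℕ) {c : ℝ} (hc : ∀ ω, c ≤ g ω) :
    c ≤ ∫ ω, (g ω + δ * lyapunovTail τ k fun i => a i ω) ∂μ := by
  calc c = ∫ _, c ∂μ := by simp
    _ ≤ _ := integral_mono (integrable_const c)
        (hg.add ((integrable_lyapunovTail ha τ k).const_mul δ))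
        fun ω => le_add_of_le_of_nonneg (hc ω)
          (mul_nonneg hδ (lyapunovTail_nonneg τ k fun i => ha0 i ω))

theorem ConvexOn.two_mul_integral_sub_le {E : Type*} [IsProbabilityMeasure μ]
    [NormedAddCommGroup E] [InnerProductSpace ℝ E] [CompleteSpace E]
    {f : E → ℝ} (hconv : ConvexOn ℝ univ f) (hdiff : Differentiable ℝ f) {Y Z : Ω → E} {c : ℝ}
    (hZ : ∀ ω, f (Z ω) = c) (hfY : Integrable (fun ω => f (Y ω)) μ)
    (hg : Integrable (fun ω => ‖gradient f (Y ω)‖ ^ 2) μ)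
    (hd : Integrable (fun ω => ‖Y ω - Z ω‖ ^ 2) μ) {t : ℝ} (ht : 0 < t) :
    2 * t * (∫ ω, f (Y ω) ∂μ - c)
      ≤ t ^ 2 * ∫ ω, ‖gradient f (Y ω)‖ ^ 2 ∂μ + ∫ ω, ‖Y ω - Z ω‖ ^ 2 ∂μ := by
  have hpt : ∀ ω, 2 * t * (f (Y ω) - c)
      ≤ t ^ 2 * ‖gradient f (Y ω)‖ ^ 2 + 1 * ‖Y ω - Z ω‖ ^ 2 := by
    intro ω
    have h := hconv.sub_le_norm_gradient_mul_norm_sub (hdiff (Y ω)) (Z ω)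
    rw [hZ] at h
    nlinarith [sq_nonneg (t * ‖gradient f (Y ω)‖ - ‖Y ω - Z ω‖)]
  have hint : ∫ ω, 2 * t * (f (Y ω) - c) ∂μ
      ≤ t ^ 2 * ∫ ω, ‖gradient f (Y ω)‖ ^ 2 ∂μ + 1 * ∫ ω, ‖Y ω - Z ω‖ ^ 2 ∂μ :=
    (integral_mono ((hfY.sub (integrable_const c)).const_mul _)
      ((hg.const_mul _).add (hd.const_mul 1)) hpt).trans_eq (integral_mul_add_mul hg hd _ 1)
  rwa [integral_const_mul, integral_sub hfY (integrable_const c), integral_const, probReal_univ,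
    one_smul, one_mul] at hint

end Integral

section History

variable {Ω α β : Type*} [MeasurableSpace α] [MeasurableSpace β]

-- The paper's `χ^n`, generated by `x^0, …, x^n` and the delay vectors up to step `n`.
abbrev historySigma (X : ℕ → Ω → α) (J : ℕ → Ω → β) (n : ℕ) : MeasurableSpace Ω :=
  (⨆ l ∈ Finset.range (n + 1), MeasurableSpace.comap (X l) inferInstance) ⊔
    (⨆ l ∈ Finset.range (n + 1), MeasurableSpace.comap (J l) inferInstance)

theorem historySigma_le [mΩ : MeasurableSpace Ω] {X : ℕ → Ω → α} {J : ℕ → Ω → β}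
    (hX : ∀ l, Measurable (X l)) (hJ : ∀ l, Measurable (J l)) (n : ℕ) :
    historySigma X J n ≤ mΩ :=
  sup_le (iSup₂_le fun l _ => (hX l).comap_le) (iSup₂_le fun l _ => (hJ l).comap_le)

theorem measurable_historySigma (X : ℕ → Ω → α) (J : ℕ → Ω → β) (n : ℕ) :
    Measurable[historySigma X J n] (X n) :=
  measurable_iff_comap_le.mpr <| le_sup_left.trans' <|
    le_biSup (fun l => MeasurableSpace.comap (X l) inferInstance) (Finset.self_mem_range_succ n)

end History

section AsyncBCD

variable {ι : Type*} [Fintype ι]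

/-- A sample path of async-BCD: `i k` is the updated block `i_k`, `j k l` the delay `j(k, l)` and
`xhat k` the delayed iterate `x̂^k`. -/
structure IsAsyncBCDPath (f : EuclideanSpace ℝ ι → ℝ) (L γ : ℝ) (τ : ℕ)
    (x xhat : ℕ → EuclideanSpace ℝ ι) (i : ℕ → ι) (j : ℕ → ι → ℕ) : Prop where
  delay_le_bound : ∀ k l, j k l ≤ τ
  delayed_apply : ∀ k l, xhat k l = x (k - j k l) l
  update_apply : ∀ k, x (k + 1) (i k) = x k (i k) - (γ / L) * gradient f (xhat k) (i k)
  update_apply_of_ne : ∀ k l, l ≠ i k → x (k + 1) l = x k l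

namespace IsAsyncBCDPath

variable {f : EuclideanSpace ℝ ι → ℝ} {L γ : ℝ} {τ : ℕ} {x xhat : ℕ → EuclideanSpace ℝ ι}
  {i : ℕ → ι} {j : ℕ → ι → ℕ}

theorem norm_sub_delayed_le (h : IsAsyncBCDPath f L γ τ x xhat i j) (k : ℕ) :
    ‖x k - xhat k‖ ≤ ∑ m ∈ Finset.Ico (k - τ) k, ‖x (m + 1) - x m‖ :=
  EuclideanSpace.norm_le_sum_norm_sub_of_apply_eq (a := fun l => k - j k l) (b := fun _ => k)
    (fun l => by have := h.delay_le_bound k l; omega) (fun l => Nat.sub_le k _) (fun _ => le_rfl)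
    fun l => by simp [h.delayed_apply]

theorem norm_delayed_sub_le (h : IsAsyncBCDPath f L γ τ x xhat i j) (k : ℕ) :
    ‖xhat k - x (k - τ)‖ ≤ ∑ m ∈ Finset.Ico (k - τ) k, ‖x (m + 1) - x m‖ :=
  EuclideanSpace.norm_le_sum_norm_sub_of_apply_eq (a := fun _ => k - τ) (b := fun l => k - j k l)
    (fun _ => le_rfl) (fun l => by have := h.delay_le_bound k l; omega) (fun l => Nat.sub_le k _)
    fun l => by simp [h.delayed_apply]

theorem step_eq [DecidableEq ι] (h : IsAsyncBCDPath f L γ τ x xhat i j) (k : ℕ) :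
    x (k + 1) = x k + EuclideanSpace.single (i k) (-(γ / L) * gradient f (xhat k) (i k)) := by
  rw [EuclideanSpace.eq_add_single_sub_of_forall_ne (h.update_apply_of_ne k), h.update_apply]
  congr 2
  ring

theorem abs_gradient_delayed_apply (h : IsAsyncBCDPath f L γ τ x xhat i j) (hL : 0 < L)
    (hγ : 0 < γ) (k : ℕ) : |gradient f (xhat k) (i k)| = L / γ * ‖x (k + 1) - x k‖ := by
  classical
  rw [h.step_eq k, add_sub_cancel_left, PiLp.norm_single, Real.norm_eq_abs, abs_mul, abs_neg,
    abs_of_pos (div_pos hγ hL)]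
  field_simp

theorem descent [DecidableEq ι] (h : IsAsyncBCDPath f L γ τ x xhat i j) {ε : ℝ} (hL : 0 < L)
    (hγ : 0 < γ) (hε : 0 < ε) (hτ : 0 < τ) (hdiff : Differentiable ℝ f)
    (hlip : ∀ y z, ‖gradient f y - gradient f z‖ ≤ L * ‖y - z‖) (k : ℕ) :
    f (x (k + 1)) + (L / γ - L / 2 - L * ε * τ / 2) * ‖x (k + 1) - x k‖ ^ 2
      ≤ f (x k) + L / (2 * ε) * ∑ m ∈ Finset.Ico (k - τ) k, ‖x (m + 1) - x m‖ ^ 2 := by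
  have hτ' : (0 : ℝ) < τ := Nat.cast_pos.mpr hτ
  have hstep := descent_of_delayed_coordinate_step hL hγ (mul_pos hε hτ') hdiff hlip (h.step_eq k)
    (h.norm_sub_delayed_le k)
  have hdelay : L / (2 * (ε * τ)) * (∑ m ∈ Finset.Ico (k - τ) k, ‖x (m + 1) - x m‖) ^ 2
      ≤ L / (2 * ε) * ∑ m ∈ Finset.Ico (k - τ) k, ‖x (m + 1) - x m‖ ^ 2 := by
    calc _ ≤ L / (2 * (ε * τ)) * (τ * ∑ m ∈ Finset.Ico (k - τ) k, ‖x (m + 1) - x m‖ ^ 2) := by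
          gcongr
          exact sq_sum_Ico_sub_le τ k _
      _ = _ := by field_simp
  rw [← mul_assoc] at hstep
  linarith

theorem lyapunov_gap [DecidableEq ι] (h : IsAsyncBCDPath f L γ τ x xhat i j) {ε : ℝ}
    (hL : 0 < L) (hγ : 0 < γ) (hε : 0 < ε) (hτ : 0 < τ) (hdiff : Differentiable ℝ f)
    (hlip : ∀ y z, ‖gradient f y - gradient f z‖ ≤ L * ‖y - z‖) (δ : ℝ) (k : ℕ) :
    (L / γ - L / 2 - L * ε * τ / 2 - δ * τ) * ‖x (k + 1) - x k‖ ^ 2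
        + (δ - L / (2 * ε)) * ∑ m ∈ Finset.Ico (k - τ) k, ‖x (m + 1) - x m‖ ^ 2
      ≤ (f (x k) + δ * lyapunovTail τ k fun m => ‖x (m + 1) - x m‖ ^ 2)
        - (f (x (k + 1)) + δ * lyapunovTail τ (k + 1) fun m => ‖x (m + 1) - x m‖ ^ 2) := by
  rw [lyapunovTail_succ]
  linarith [h.descent hL hγ hε hτ hdiff hlip k]

theorem sq_gradient_lagged_apply_le (h : IsAsyncBCDPath f L γ τ x xhat i j) (hL : 0 < L)
    (hγ : 0 < γ) (hlip : ∀ y z, ‖gradient f y - gradient f z‖ ≤ L * ‖y - z‖) (k : ℕ) :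
    gradient f (x (k - τ)) (i k) ^ 2 ≤ 2 * ((L / γ) ^ 2 * ‖x (k + 1) - x k‖ ^ 2
      + L ^ 2 * (τ * ∑ m ∈ Finset.Ico (k - τ) k, ‖x (m + 1) - x m‖ ^ 2)) := by
  set s := ∑ m ∈ Finset.Ico (k - τ) k, ‖x (m + 1) - x m‖
  have hcoord : |gradient f (x (k - τ)) (i k)| ≤ L / γ * ‖x (k + 1) - x k‖ + L * s := by
    have hdiff := abs_sub_abs_le_abs_sub (gradient f (x (k - τ)) (i k)) (gradient f (xhat k) (i k))
    have happly := PiLp.norm_apply_le (gradient f (x (k - τ)) - gradient f (xhat k)) (i k)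
    have hlag : ‖gradient f (x (k - τ)) - gradient f (xhat k)‖ ≤ L * s := by
      refine (hlip _ _).trans ?_
      rw [norm_sub_rev]
      gcongr
      exact h.norm_delayed_sub_le k
    rw [h.abs_gradient_delayed_apply hL hγ k] at hdiff
    rw [PiLp.sub_apply, Real.norm_eq_abs] at happly
    linarith
  calc _ ≤ 2 * ((L / γ * ‖x (k + 1) - x k‖) ^ 2 + (L * s) ^ 2) :=
        sq_le_two_mul_add_sq_of_abs_le hcoord
    _ ≤ _ := by
      rw [mul_pow, mul_pow]
      gcongr
      exact sq_sum_Ico_sub_le τ k _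

end IsAsyncBCDPath

theorem sq_norm_gradient_le_of_lag {f : EuclideanSpace ℝ ι → ℝ} {L : ℝ} (hL : 0 ≤ L)
    (hlip : ∀ y z, ‖gradient f y - gradient f z‖ ≤ L * ‖y - z‖) (x : ℕ → EuclideanSpace ℝ ι)
    (τ k : ℕ) : ‖gradient f (x k)‖ ^ 2 ≤ 2 * (‖gradient f (x (k - τ))‖ ^ 2
      + L ^ 2 * (τ * ∑ m ∈ Finset.Ico (k - τ) k, ‖x (m + 1) - x m‖ ^ 2)) := by
  set s := ∑ m ∈ Finset.Ico (k - τ) k, ‖x (m + 1) - x m‖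
  have hlag : ‖x k - x (k - τ)‖ ≤ s := by
    rw [← Finset.sum_Ico_sub x (Nat.sub_le k τ)]
    exact norm_sum_le _ _
  have hnorm : |‖gradient f (x k)‖| ≤ ‖gradient f (x (k - τ))‖ + L * s := by
    rw [abs_norm]
    refine (norm_le_norm_add_norm_sub' _ (gradient f (x (k - τ)))).trans ?_
    gcongr
    exact (hlip _ _).trans (by gcongr)
  calc _ ≤ 2 * (‖gradient f (x (k - τ))‖ ^ 2 + (L * s) ^ 2) := sq_le_two_mul_add_sq_of_abs_le hnorm
    _ ≤ _ := by
      rw [mul_pow]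
      gcongr
      exact sq_sum_Ico_sub_le τ k _

end AsyncBCD

namespace IsAsyncBCDPath

variable {Ω ι : Type*} [mΩ : MeasurableSpace Ω] {μ : Measure Ω} [Fintype ι]
  {f : EuclideanSpace ℝ ι → ℝ} {L γ : ℝ} {τ : ℕ} {X xhat : ℕ → Ω → EuclideanSpace ℝ ι}
  {ik : ℕ → Ω → ι} {jv : ℕ → Ω → ι → ℕ}

theorem integral_lyapunov_gap [DecidableEq ι]
    (hpath : ∀ ω, IsAsyncBCDPath f L γ τ (X · ω) (xhat · ω) (ik · ω) (jv · ω)) {ε δ : ℝ}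
    (hL : 0 < L) (hγ : 0 < γ) (hε : 0 < ε) (hτ : 0 < τ) (hdiff : Differentiable ℝ f)
    (hlip : ∀ y z, ‖gradient f y - gradient f z‖ ≤ L * ‖y - z‖)
    (hIf : ∀ k, Integrable (fun ω => f (X k ω)) μ)
    (hID2 : ∀ k, Integrable (fun ω => ‖X (k + 1) ω - X k ω‖ ^ 2) μ) (k : ℕ) :
    (L / γ - L / 2 - L * ε * τ / 2 - δ * τ) * ∫ ω, ‖X (k + 1) ω - X k ω‖ ^ 2 ∂μ
        + (δ - L / (2 * ε)) * ∫ ω, ∑ m ∈ Finset.Ico (k - τ) k, ‖X (m + 1) ω - X m ω‖ ^ 2 ∂μ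
      ≤ ∫ ω, (f (X k ω) + δ * lyapunovTail τ k fun m => ‖X (m + 1) ω - X m ω‖ ^ 2) ∂μ
        - ∫ ω, (f (X (k + 1) ω)
            + δ * lyapunovTail τ (k + 1) fun m => ‖X (m + 1) ω - X m ω‖ ^ 2) ∂μ := by
  have hV : ∀ n, Integrable (fun ω =>
      f (X n ω) + δ * lyapunovTail τ n fun m => ‖X (m + 1) ω - X m ω‖ ^ 2) μ := fun n =>
    (hIf n).add ((integrable_lyapunovTail hID2 τ n).const_mul δ)
  have hW := integrable_finsetSum (Finset.Ico (k - τ) k) fun m _ => hID2 m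
  rw [← integral_sub (hV k) (hV (k + 1)), ← integral_mul_add_mul (hID2 k) hW]
  exact integral_mono (((hID2 k).const_mul _).add (hW.const_mul _))
    ((hV k).sub (hV (k + 1))) fun ω => (hpath ω).lyapunov_gap hL hγ hε hτ hdiff hlip δ k

theorem integral_sq_norm_gradient_le [MeasurableSpace ι] [MeasurableSingletonClass ι]
    (hpath : ∀ ω, IsAsyncBCDPath f L γ τ (X · ω) (xhat · ω) (ik · ω) (jv · ω))
    (hL : 0 < L) (hγ : 0 < γ) (hlip : ∀ y z, ‖gradient f y - gradient f z‖ ≤ L * ‖y - z‖)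
    (hXm : ∀ k, Measurable (X k)) (hjvm : ∀ k, Measurable (jv k)) (hikm : ∀ k, Measurable (ik k))
    {n : ℕ} (hn : n ≠ 0) {k : ℕ}
    (hunif : ∀ i A, MeasurableSet[historySigma X jv (k - τ)] A →
      μ (A ∩ {ω | ik k ω = i}) = μ A / n)
    (hID2 : ∀ k, Integrable (fun ω => ‖X (k + 1) ω - X k ω‖ ^ 2) μ)
    (hIg2 : ∀ k, Integrable (fun ω => ‖gradient f (X k ω)‖ ^ 2) μ) :
    ∫ ω, ‖gradient f (X k ω)‖ ^ 2 ∂μ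
      ≤ 4 * n * (L / γ) ^ 2 * ∫ ω, ‖X (k + 1) ω - X k ω‖ ^ 2 ∂μ
        + (4 * n + 2) * L ^ 2 * τ
          * ∫ ω, ∑ m ∈ Finset.Ico (k - τ) k, ‖X (m + 1) ω - X m ω‖ ^ 2 ∂μ := by
  have hW := integrable_finsetSum (Finset.Ico (k - τ) k) fun m _ => hID2 m
  have hgrad : Continuous (gradient f) :=
    (LipschitzWith.of_dist_le_mul (K := L.toNNReal) fun y z => by
      simpa [dist_eq_norm, Real.coe_toNNReal _ hL.le] using hlip y z).continuous
  have hlag := integral_le_mul_add_mul_of_le (fun ω => sq_nonneg _) (hIg2 (k - τ)) hW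
    (a := 2) (b := 2 * L ^ 2 * τ) fun ω =>
      (sq_norm_gradient_le_of_lag hL.le hlip (X · ω) τ k).trans_eq (by ring)
  have hsample : ∫ ω, ‖gradient f (X (k - τ) ω)‖ ^ 2 ∂μ
      = n * ∫ ω, gradient f (X (k - τ) ω) (ik k ω) ^ 2 ∂μ :=
    integral_sq_norm_eq_of_uniform_index (historySigma_le hXm hjvm (k - τ)) (hikm k) hn hunif
      (hgrad.measurable.comp (measurable_historySigma X jv (k - τ))) (hIg2 _)
  have hcoord := integral_le_mul_add_mul_of_le (fun ω => sq_nonneg _) (hID2 k) hW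
    (a := 2 * (L / γ) ^ 2) (b := 2 * L ^ 2 * τ) fun ω =>
      ((hpath ω).sq_gradient_lagged_apply_le hL hγ hlip k).trans_eq (by ring)
  have hn' := mul_le_mul_of_nonneg_left hcoord (Nat.cast_nonneg n)
  rw [hsample] at hlag
  linarith

end IsAsyncBCDPath

theorem one_div_sub_half_sub_pos {τ c γ : ℝ} (hτ : 0 < τ) (hc : 0 < c) (hc1 : c < 1)
    (hγ : γ = 2 * c / (2 * τ + 1)) : 0 < 1 / γ - 1 / 2 - τ := by
  have hgap : 1 / γ - 1 / 2 - τ = (2 * τ + 1) * (1 - c) / (2 * c) := by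
    rw [hγ]
    field_simp
    ring
  rw [hgap]
  exact div_pos (mul_pos (by linarith) (by linarith)) (by linarith)

theorem lyapunov_coefficients_eq {L γ ε τ δ : ℝ} (hτ : 0 < τ) (hγ : 0 < γ) (hε : 0 < ε)
    (hεeq : ε + 1 / ε = 1 + (1 / τ) * (1 / γ - 1 / 2))
    (hδ : δ = (1 + (ε / (2 * τ)) * (1 / γ - 1 / 2 - τ)) * (L / (2 * ε))) :
    L / γ - L / 2 - L * ε * τ / 2 - δ * τ = τ * (L / (4 * τ) * (1 / γ - 1 / 2 - τ)) ∧
      δ - L / (2 * ε) = L / (4 * τ) * (1 / γ - 1 / 2 - τ) := by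
  have hinv : 1 / γ = 1 / 2 + τ * (ε + 1 / ε - 1) := by
    field_simp at hεeq ⊢
    linarith
  subst hδ
  constructor
  · rw [div_eq_mul_one_div L γ, hinv]
    field_simp
    ring
  · field_simp
    ring

theorem add_mul_le_max_mul {A Ek EW N L γ τ δ : ℝ} (hN : 0 ≤ N) (hτ : 1 ≤ τ) (hEk : 0 ≤ Ek)
    (hEW : 0 ≤ EW) (hA : A ≤ 4 * N * (L / γ) ^ 2 * Ek + (4 * N + 2) * L ^ 2 * τ * EW) :
    A + τ * (δ * EW)
      ≤ max (8 * N * L ^ 2 / γ ^ 2) ((12 * N + 2) * L ^ 2 * τ + δ * τ) * (τ * Ek + EW) := by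
  set β := max (8 * N * L ^ 2 / γ ^ 2) ((12 * N + 2) * L ^ 2 * τ + δ * τ)
  have hβ₁ : 4 * N * (L / γ) ^ 2 ≤ β * τ := by
    have h8 : 8 * N * L ^ 2 / γ ^ 2 ≤ β := le_max_left _ _
    have h8' : 0 ≤ 8 * N * L ^ 2 / γ ^ 2 := by positivity
    have hτβ : β ≤ β * τ := le_mul_of_one_le_right (h8'.trans h8) hτ
    have h4 : 4 * N * (L / γ) ^ 2 = 8 * N * L ^ 2 / γ ^ 2 / 2 := by ring
    linarith
  have hβ₂ : (4 * N + 2) * L ^ 2 * τ + δ * τ ≤ β := by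
    refine le_trans ?_ (le_max_right _ _)
    have : 0 ≤ 8 * N * L ^ 2 * τ := by have := hN; positivity
    linear_combination this
  linear_combination hA + mul_le_mul_of_nonneg_right hβ₁ hEk + mul_le_mul_of_nonneg_right hβ₂ hEW

theorem bounded_stochastic_convex_lemma_general
    (N : ℕ) (hN : 0 < N)
    (f : EuclideanSpace ℝ (Fin N) → ℝ)
    (L : ℝ) (hL : 0 < L)
    (hdiff : Differentiable ℝ f)
    (hlip : ∀ y z : EuclideanSpace ℝ (Fin N), ‖gradient f y - gradient f z‖ ≤ L * ‖y - z‖)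
    (Ω : Type) [MeasurableSpace Ω] (μ : Measure Ω) [IsProbabilityMeasure μ]
    (X : ℕ → Ω → EuclideanSpace ℝ (Fin N)) (hXm : ∀ k, Measurable (X k))
    (jv : ℕ → Ω → Fin N → ℕ) (hjvm : ∀ k, Measurable (jv k))
    (xhat : ℕ → Ω → EuclideanSpace ℝ (Fin N))
    (hxhat : ∀ k ω i, xhat k ω i = X (k - jv k ω i) ω i)
    (ik : ℕ → Ω → Fin N) (hikm : ∀ k, Measurable (ik k))
    (τ : ℕ) (hτ1 : 1 ≤ τ) (hbdd : ∀ k ω i, jv k ω i ≤ τ)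
    (c γ : ℝ) (hc : 0 < c) (hc1 : c < 1) (hγ : γ = 2 * c / (2 * (τ : ℝ) + 1))
    (hupd : ∀ k ω, X (k+1) ω (ik k ω) = X k ω (ik k ω) - (γ / L) * gradient f (xhat k ω) (ik k ω))
    (hfix : ∀ k ω i, i ≠ ik k ω → X (k+1) ω i = X k ω i)
    (hblock : ∀ k : ℕ, ∀ i : Fin N, ∀ A : Set Ω,
      MeasurableSet[(⨆ l ∈ Finset.range (k - τ + 1), MeasurableSpace.comap (X l) inferInstance) ⊔
        (⨆ l ∈ Finset.range (k - τ + 1), MeasurableSpace.comap (jv l) inferInstance)] A →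
      μ (A ∩ {ω | ik k ω = i}) = μ A / (N : ENNReal))
    (hIf : ∀ k, Integrable (fun ω => f (X k ω)) μ)
    (hID2 : ∀ k, Integrable (fun ω => ‖X (k+1) ω - X k ω‖ ^ 2) μ)
    (hIg2 : ∀ k, Integrable (fun ω => ‖gradient f (X k ω)‖ ^ 2) μ)
    (hconv : ConvexOn ℝ Set.univ f)
    (xstar : EuclideanSpace ℝ (Fin N)) (hxstar : ∀ y, f xstar ≤ f y)
    (xbar : ℕ → Ω → EuclideanSpace ℝ (Fin N))
    (hxbar : ∀ k ω, (∀ y, f (xbar k ω) ≤ f y) ∧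
      ‖X k ω - xbar k ω‖ = Metric.infDist (X k ω) {z | ∀ y, f z ≤ f y})
    (hIxbar : ∀ k, Integrable (fun ω => ‖X k ω - xbar k ω‖ ^ 2) μ)
    (ε : ℝ) (hε : 0 < ε) (hεeq : ε + 1 / ε = 1 + (1 / (τ : ℝ)) * (1 / γ - 1 / 2))
    (δ : ℝ) (hδ : δ = (1 + (ε / (2 * (τ : ℝ))) * (1 / γ - 1 / 2 - (τ : ℝ))) * (L / (2 * ε)))
    (β : ℝ) (hβ : β = max (8 * (N : ℝ) * L ^ 2 / γ ^ 2) ((12 * (N : ℝ) + 2) * L ^ 2 * (τ : ℝ) + δ * (τ : ℝ)))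
    (α : ℝ) (hα : α = β / ((L / (4 * (τ : ℝ))) * (1 / γ - 1 / 2 - (τ : ℝ))))
    (π ES : ℕ → ℝ)
    (hπ : ∀ k, π k = (∫ ω, (f (X k ω) + δ *
      ∑ i ∈ Finset.Ico (k - τ) k, ((i + τ + 1 - k : ℕ) : ℝ) * ‖X (i+1) ω - X i ω‖ ^ 2) ∂μ) - f xstar)
    (hES : ∀ k, ES k = ∫ ω, (∑ i ∈ Finset.Ico (k - τ) k, δ * ‖X (i+1) ω - X i ω‖ ^ 2) ∂μ) :
    ∀ k : ℕ,
      (π k) ^ 2 ≤ α * (π k - π (k+1)) * ((τ : ℝ) * ES k + ∫ ω, ‖X k ω - xbar k ω‖ ^ 2 ∂μ) := by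
  intro k
  have hτ : (0 : ℝ) < τ := Nat.cast_pos.mpr hτ1
  have hγ0 : 0 < γ := by rw [hγ]; positivity
  obtain ⟨hc₁, hc₂⟩ := lyapunov_coefficients_eq hτ hγ0 hε hεeq hδ
  set η := L / (4 * τ) * (1 / γ - 1 / 2 - τ)
  have hη0 : 0 < η := mul_pos (by positivity) (one_div_sub_half_sub_pos hτ hc hc1 hγ)
  have hδ0 : 0 < δ := by linarith [div_pos hL (mul_pos two_pos hε)]
  have hpath : ∀ ω, IsAsyncBCDPath f L γ τ (X · ω) (xhat · ω) (ik · ω) (jv · ω) := fun ω =>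
    ⟨(hbdd · ω), (hxhat · ω), (hupd · ω), (hfix · ω)⟩
  have hπV : ∀ n, π n = ∫ ω, (f (X n ω) + δ * lyapunovTail τ n fun m =>
      ‖X (m + 1) ω - X m ω‖ ^ 2) ∂μ - f xstar := hπ
  have hESW : ES k = δ * ∫ ω, ∑ m ∈ Finset.Ico (k - τ) k, ‖X (m + 1) ω - X m ω‖ ^ 2 ∂μ := by
    rw [hES k, ← integral_const_mul]
    simp_rw [Finset.mul_sum]
  have hdesc : η * (τ * ∫ ω, ‖X (k + 1) ω - X k ω‖ ^ 2 ∂μ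
      + ∫ ω, ∑ m ∈ Finset.Ico (k - τ) k, ‖X (m + 1) ω - X m ω‖ ^ 2 ∂μ) ≤ π k - π (k + 1) := by
    have := IsAsyncBCDPath.integral_lyapunov_gap hpath hL hγ0 hε hτ1 hdiff hlip hIf hID2 (δ := δ) k
    rw [hc₁, hc₂] at this
    rw [hπV, hπV]
    linear_combination this
  have hgrad := add_mul_le_max_mul (δ := δ) (Nat.cast_nonneg N) (Nat.one_le_cast.mpr hτ1)
    (integral_nonneg fun ω => sq_nonneg _)
    (integral_nonneg fun ω => Finset.sum_nonneg fun m _ => sq_nonneg _)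
    (IsAsyncBCDPath.integral_sq_norm_gradient_le hpath hL hγ0 hlip hXm hjvm hikm hN.ne'
      (hblock k) hID2 hIg2)
  rw [← hESW, ← hβ, show β = α * η by rw [hα]; field_simp, mul_assoc] at hgrad
  have hπle : π k ≤ (∫ ω, f (X k ω) ∂μ - f xstar) + τ * ES k := by
    rw [hπV, hES]
    linarith [integral_add_mul_lyapunovTail_le (a := fun i ω => ‖X (i + 1) ω - X i ω‖ ^ 2)
      (hIf k) hID2 (fun i ω => sq_nonneg _) hδ0.le τ k]
  have hπ0 : 0 ≤ π k := by
    rw [hπV, sub_nonneg]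
    exact le_integral_add_mul_lyapunovTail (hIf k) hID2 (fun i ω => sq_nonneg _) hδ0.le τ k
      fun ω => hxstar (X k ω)
  have hconvex := fun t (ht : 0 < t) => hconv.two_mul_integral_sub_le hdiff
    (fun ω => le_antisymm ((hxbar k ω).1 xstar) (hxstar _)) (hIf k) (hIg2 k) (hIxbar k) ht
  have hα0 : 0 ≤ α := by
    rw [hα, hβ]
    exact div_nonneg (le_max_of_le_left (by positivity)) hη0.le
  have hkey := hgrad.trans (mul_le_mul_of_nonneg_left hdesc hα0)
  have hT0 : 0 ≤ τ * ES k := by rw [hESW]; positivity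
  have hB0 : 0 ≤ ∫ ω, ‖X k ω - xbar k ω‖ ^ 2 ∂μ := integral_nonneg fun ω => sq_nonneg _
  refine (sq_le_add_mul_add_of_le_add hπ0 hπle hT0 (integral_nonneg fun ω => sq_nonneg _) hB0
    hconvex).trans ?_
  rw [add_comm (τ * ES k)]
  exact mul_le_mul_of_nonneg_right hkey (add_nonneg hB0 hT0)

theorem bounded_stochastic_convex_lemma
    (N : ℕ) (hN : 0 < N)
    (f : EuclideanSpace ℝ (Fin N) → ℝ)
    (L : ℝ) (hL : 0 < L)
    (hdiff : Differentiable ℝ f)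
    (hlip : ∀ y z : EuclideanSpace ℝ (Fin N), ‖gradient f y - gradient f z‖ ≤ L * ‖y - z‖)
    (fmin : ℝ) (hfmin : ∀ y, fmin ≤ f y)
    (Ω : Type) [MeasurableSpace Ω] (μ : Measure Ω) [IsProbabilityMeasure μ]
    (X : ℕ → Ω → EuclideanSpace ℝ (Fin N)) (hXm : ∀ k, Measurable (X k))
    (jv : ℕ → Ω → Fin N → ℕ) (hjvm : ∀ k, Measurable (jv k))
    (hjk : ∀ k ω i, jv k ω i ≤ k)
    (xhat : ℕ → Ω → EuclideanSpace ℝ (Fin N))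
    (hxhat : ∀ k ω i, xhat k ω i = X (k - jv k ω i) ω i)
    (ik : ℕ → Ω → Fin N) (hikm : ∀ k, Measurable (ik k))
    (τ : ℕ) (hτ1 : 1 ≤ τ) (hbdd : ∀ k ω i, jv k ω i ≤ τ)
    (c γ : ℝ) (hc : 0 < c) (hc1 : c < 1) (hγ : γ = 2 * c / (2 * (τ : ℝ) + 1))
    (hupd : ∀ k ω, X (k+1) ω (ik k ω) = X k ω (ik k ω) - (γ / L) * gradient f (xhat k ω) (ik k ω))
    (hfix : ∀ k ω i, i ≠ ik k ω → X (k+1) ω i = X k ω i)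
    (hblock : ∀ k : ℕ, ∀ i : Fin N, ∀ A : Set Ω,
      MeasurableSet[(⨆ l ∈ Finset.range (k - τ + 1), MeasurableSpace.comap (X l) inferInstance) ⊔
        (⨆ l ∈ Finset.range (k - τ + 1), MeasurableSpace.comap (jv l) inferInstance)] A →
      μ (A ∩ {ω | ik k ω = i}) = μ A / (N : ENNReal))
    (hIf : ∀ k, Integrable (fun ω => f (X k ω)) μ)
    (hID2 : ∀ k, Integrable (fun ω => ‖X (k+1) ω - X k ω‖ ^ 2) μ)
    (hIg : ∀ k, Integrable (fun ω => ‖gradient f (X k ω)‖) μ)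
    (hIg2 : ∀ k, Integrable (fun ω => ‖gradient f (X k ω)‖ ^ 2) μ)
    (hconv : ConvexOn ℝ Set.univ f)
    (xstar : EuclideanSpace ℝ (Fin N)) (hxstar : ∀ y, f xstar ≤ f y)
    (xbar : ℕ → Ω → EuclideanSpace ℝ (Fin N))
    (hxbar : ∀ k ω, (∀ y, f (xbar k ω) ≤ f y) ∧
      ‖X k ω - xbar k ω‖ = Metric.infDist (X k ω) {z | ∀ y, f z ≤ f y})
    (hIxbar : ∀ k, Integrable (fun ω => ‖X k ω - xbar k ω‖ ^ 2) μ)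
    (ε : ℝ) (hε : 0 < ε) (hεeq : ε + 1 / ε = 1 + (1 / (τ : ℝ)) * (1 / γ - 1 / 2))
    (δ : ℝ) (hδ : δ = (1 + (ε / (2 * (τ : ℝ))) * (1 / γ - 1 / 2 - (τ : ℝ))) * (L / (2 * ε)))
    (β : ℝ) (hβ : β = max (8 * (N : ℝ) * L ^ 2 / γ ^ 2) ((12 * (N : ℝ) + 2) * L ^ 2 * (τ : ℝ) + δ * (τ : ℝ)))
    (α : ℝ) (hα : α = β / ((L / (4 * (τ : ℝ))) * (1 / γ - 1 / 2 - (τ : ℝ))))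
    (π ES : ℕ → ℝ)
    (hπ : ∀ k, π k = (∫ ω, (f (X k ω) + δ *
      ∑ i ∈ Finset.Ico (k - τ) k, ((i + τ + 1 - k : ℕ) : ℝ) * ‖X (i+1) ω - X i ω‖ ^ 2) ∂μ) - f xstar)
    (hES : ∀ k, ES k = ∫ ω, (∑ i ∈ Finset.Ico (k - τ) k, δ * ‖X (i+1) ω - X i ω‖ ^ 2) ∂μ) :
    ∀ k : ℕ,
      (π k) ^ 2 ≤ α * (π k - π (k+1)) * ((τ : ℝ) * ES k + ∫ ω, ‖X k ω - xbar k ω‖ ^ 2 ∂μ) :=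
  bounded_stochastic_convex_lemma_general N hN f L hL hdiff hlip Ω μ X hXm jv hjvm xhat hxhat ik
    hikm τ hτ1 hbdd c γ hc hc1 hγ hupd hfix hblock hIf hID2 hIg2 hconv xstar hxstar xbar hxbar
    hIxbar ε hε hεeq δ hδ β hβ α hα π ES hπ hES
end

section
/- Under stochastic unbounded delays, for every k one has E‖d^k‖₂² ≤ Σ_{i=0}^{k−1} c_{k−1−i}·E‖Δ^i‖₂². -/
open MeasureTheory Finset
open scoped ENNReal

/-! Coordinatewise, `x^k_i - x̂^k_i` telescopes over the last `j(k,i) ≤ j(k)` increments, so by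
Cauchy–Schwarz `‖d^k‖² ≤ j(k) ∑_{l=k-j(k)}^{k-1} ‖Δ^l‖²`. For each fixed value `j` the right side is
`χ^k`-measurable, and on `χ^k` the event `{j(k) = j}` has conditional probability at most `p_j`;
hence `E‖d^k‖² ≤ ∑_j p_j j ∑_{l=k-j}^{k-1} E‖Δ^l‖²`. After exchanging the sums, `E‖Δ^i‖²` carries
the weight `∑_{j ≥ k-i} j p_j ≤ s_{k-i} ≤ c_{k-1-i}`. -/

theorem sq_sub_le_mul_sum_sq_sub (a : ℕ → ℝ) {k m J : ℕ} (hmJ : m ≤ J) :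
    (a k - a (k - m)) ^ 2 ≤ J * ∑ l ∈ Ico (k - J) k, (a (l + 1) - a l) ^ 2 :=
  calc (a k - a (k - m)) ^ 2 = (∑ l ∈ Ico (k - m) k, (a (l + 1) - a l)) ^ 2 := by
        rw [sum_Ico_sub a (Nat.sub_le k m)]
    _ ≤ #(Ico (k - m) k) * ∑ l ∈ Ico (k - m) k, (a (l + 1) - a l) ^ 2 := sq_sum_le_card_mul_sum_sq
    _ ≤ J * ∑ l ∈ Ico (k - J) k, (a (l + 1) - a l) ^ 2 := by
        have hcard : (#(Ico (k - m) k) : ℝ) ≤ J := by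
          rw [Nat.card_Ico]; exact_mod_cast (by omega : k - (k - m) ≤ J)
        gcongr ?_ * ?_
        · exact sum_le_sum_of_subset_of_nonneg (Ico_subset_Ico (by omega) le_rfl)
            fun _ _ _ => sq_nonneg _

theorem norm_sub_delayed_sq_le {ι : Type*} [Fintype ι] (x : ℕ → EuclideanSpace ℝ ι)
    {y : EuclideanSpace ℝ ι} {k J : ℕ} (d : ι → ℕ) (hd : ∀ i, d i ≤ J)
    (hy : ∀ i, y i = x (k - d i) i) :
    ‖x k - y‖ ^ 2 ≤ J * ∑ l ∈ Ico (k - J) k, ‖x (l + 1) - x l‖ ^ 2 :=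
  calc ‖x k - y‖ ^ 2 = ∑ i, (x k i - x (k - d i) i) ^ 2 := by
        simp [EuclideanSpace.norm_sq_eq, hy]
    _ ≤ ∑ i, J * ∑ l ∈ Ico (k - J) k, (x (l + 1) i - x l i) ^ 2 :=
        sum_le_sum fun i _ => sq_sub_le_mul_sum_sq_sub (fun l => x l i) (hd i)
    _ = J * ∑ l ∈ Ico (k - J) k, ‖x (l + 1) - x l‖ ^ 2 := by
        simp [EuclideanSpace.norm_sq_eq, ← mul_sum, sum_comm (s := univ)]

section SubSigmaAlgebra

variable {Ω : Type*} {m : MeasurableSpace Ω} [mΩ : MeasurableSpace Ω] {μ : Measure Ω}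

theorem setLIntegral_le_mul_lintegral_of_measure_inter_le (hm : m ≤ mΩ) {S : Set Ω} {c : ℝ≥0∞}
    (hS : ∀ A, MeasurableSet[m] A → μ (A ∩ S) ≤ c * μ A) {g : Ω → ℝ≥0∞} (hg : Measurable[m] g) :
    ∫⁻ ω in S, g ω ∂μ ≤ c * ∫⁻ ω, g ω ∂μ := by
  have htrim : (μ.restrict S).trim hm ≤ c • μ.trim hm := Measure.le_iff.mpr fun A hA => by
    rw [trim_measurableSet_eq hm hA, Measure.smul_apply, smul_eq_mul,
      trim_measurableSet_eq hm hA, Measure.restrict_apply (hm A hA)]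
    exact hS A hA
  calc ∫⁻ ω in S, g ω ∂μ = ∫⁻ ω, g ω ∂(μ.restrict S).trim hm := (lintegral_trim hm hg).symm
    _ ≤ ∫⁻ ω, g ω ∂(c • μ.trim hm) := lintegral_mono' htrim le_rfl
    _ = c * ∫⁻ ω, g ω ∂μ := by rw [lintegral_smul_measure, lintegral_trim hm hg, smul_eq_mul]

theorem lintegral_comp_le_sum_mul_lintegral (hm : m ≤ mΩ) {J : Ω → ℕ} (hJ : Measurable J)
    {n : ℕ} (hJn : ∀ ω, J ω ≤ n) {c : ℕ → ℝ≥0∞}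
    (hc : ∀ j A, MeasurableSet[m] A → μ (A ∩ {ω | J ω = j}) ≤ c j * μ A)
    {g : ℕ → Ω → ℝ≥0∞} (hg : ∀ j, Measurable[m] (g j)) :
    ∫⁻ ω, g (J ω) ω ∂μ ≤ ∑ j ∈ range (n + 1), c j * ∫⁻ ω, g j ω ∂μ := by
  have hlevel : ∀ j, MeasurableSet {ω | J ω = j} := fun j => hJ (measurableSet_singleton j)
  have hsplit : ∀ ω, g (J ω) ω = ∑ j ∈ range (n + 1), {ω | J ω = j}.indicator (g j) ω := by
    intro ω
    simp [Set.indicator_apply, Nat.lt_succ_of_le (hJn ω)]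
  calc ∫⁻ ω, g (J ω) ω ∂μ = ∑ j ∈ range (n + 1), ∫⁻ ω in {ω | J ω = j}, g j ω ∂μ := by
        simp_rw [hsplit]
        rw [lintegral_finsetSum _ fun j _ => ((hg j).mono hm le_rfl).indicator (hlevel j)]
        simp_rw [lintegral_indicator (hlevel _)]
    _ ≤ ∑ j ∈ range (n + 1), c j * ∫⁻ ω, g j ω ∂μ :=
        sum_le_sum fun j _ => setLIntegral_le_mul_lintegral_of_measure_inter_le hm (hc j) (hg j)

theorem integral_le_sum_mul_integral_of_le_comp (hm : m ≤ mΩ) {J : Ω → ℕ} (hJ : Measurable J)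
    {n : ℕ} (hJn : ∀ ω, J ω ≤ n) {p : ℕ → ℝ} (hp : ∀ j, 0 ≤ p j)
    (hpJ : ∀ j A, MeasurableSet[m] A → μ (A ∩ {ω | J ω = j}) ≤ ENNReal.ofReal (p j) * μ A)
    {g : ℕ → Ω → ℝ} (hg0 : ∀ j ω, 0 ≤ g j ω) (hgm : ∀ j, Measurable[m] (g j))
    (hgi : ∀ j, Integrable (g j) μ) {F : Ω → ℝ} (hF0 : ∀ ω, 0 ≤ F ω)
    (hF : ∀ ω, F ω ≤ g (J ω) ω) :
    ∫ ω, F ω ∂μ ≤ ∑ j ∈ range (n + 1), p j * ∫ ω, g j ω ∂μ := by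
  have hrhs : 0 ≤ ∑ j ∈ range (n + 1), p j * ∫ ω, g j ω ∂μ :=
    sum_nonneg fun j _ => mul_nonneg (hp j) (integral_nonneg (hg0 j))
  rw [← ENNReal.ofReal_le_ofReal_iff hrhs]
  calc ENNReal.ofReal (∫ ω, F ω ∂μ) = ‖∫ ω, F ω ∂μ‖ₑ :=
        (Real.enorm_of_nonneg (integral_nonneg hF0)).symm
    _ ≤ ∫⁻ ω, ‖F ω‖ₑ ∂μ := enorm_integral_le_lintegral_enorm _
    _ ≤ ∫⁻ ω, ENNReal.ofReal (g (J ω) ω) ∂μ := lintegral_mono fun ω => by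
        rw [Real.enorm_of_nonneg (hF0 ω)]
        exact ENNReal.ofReal_le_ofReal (hF ω)
    _ ≤ ∑ j ∈ range (n + 1), ENNReal.ofReal (p j) * ∫⁻ ω, ENNReal.ofReal (g j ω) ∂μ :=
        lintegral_comp_le_sum_mul_lintegral hm hJ hJn hpJ fun j => (hgm j).ennreal_ofReal
    _ = ENNReal.ofReal (∑ j ∈ range (n + 1), p j * ∫ ω, g j ω ∂μ) := by
        rw [ENNReal.ofReal_sum_of_nonneg fun j _ => mul_nonneg (hp j) (integral_nonneg (hg0 j))]
        refine sum_congr rfl fun j _ => ?_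
        rw [ENNReal.ofReal_mul (hp j),
          ofReal_integral_eq_lintegral_ofReal (hgi j) (ae_of_all _ (hg0 j))]

end SubSigmaAlgebra

theorem sum_range_mul_sum_Ico_eq {R : Type*} [CommSemiring R] (a e : ℕ → R) (k : ℕ) :
    ∑ j ∈ range (k + 1), a j * ∑ i ∈ Ico (k - j) k, e i
      = ∑ i ∈ range k, (∑ j ∈ Icc (k - i) k, a j) * e i := by
  simp_rw [mul_sum, sum_mul]
  exact sum_comm' fun j i => by simp only [mem_range, mem_Ico, mem_Icc]; omega

theorem sum_delay_mul_window_sum_le {p s c e : ℕ → ℝ} (hp : ∀ j, 0 ≤ p j) (he : ∀ i, 0 ≤ e i)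
    (hs : ∀ l, HasSum (fun j : ℕ => if l ≤ j then (j : ℝ) * p j else 0) (s l))
    (hc : ∀ i, HasSum (fun l : ℕ => if i ≤ l then s l else 0) (c i)) (k : ℕ) :
    ∑ j ∈ range (k + 1), p j * (j * ∑ i ∈ Ico (k - j) k, e i)
      ≤ ∑ i ∈ range k, c (k - 1 - i) * e i := by
  have hjp : ∀ j : ℕ, 0 ≤ (j : ℝ) * p j := fun j => mul_nonneg j.cast_nonneg (hp j)
  have hs0 : ∀ l, 0 ≤ s l := fun l => (hs l).nonneg fun j => by split_ifs <;> simp [hjp]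
  have hpartial : ∀ l n : ℕ, ∑ j ∈ Icc l n, (j : ℝ) * p j ≤ s l := fun l n => by
    refine le_trans (le_of_eq ?_) (sum_le_hasSum (Icc l n) (fun j _ => ?_) (hs l))
    · exact sum_congr rfl fun j hj => (if_pos (mem_Icc.1 hj).1).symm
    · split_ifs <;> simp [hjp]
  have htail : ∀ i l : ℕ, i ≤ l → s l ≤ c i := fun i l hil => by
    simpa [hil] using le_hasSum (hc i) l fun l' _ => by split_ifs <;> simp [hs0]
  simp_rw [← mul_assoc, mul_comm (p _)]
  rw [sum_range_mul_sum_Ico_eq]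
  refine sum_le_sum fun i hi => mul_le_mul_of_nonneg_right ?_ (he i)
  exact (hpartial _ _).trans (htail _ _ (by omega))

section History

variable {Ω α β : Type*} [MeasurableSpace α] [MeasurableSpace β]

abbrev historySigmaAlgebra (X : ℕ → Ω → α) (D : ℕ → Ω → β) (k : ℕ) : MeasurableSpace Ω :=
  (⨆ l ∈ range (k + 1), MeasurableSpace.comap (X l) inferInstance) ⊔
    (⨆ l ∈ range (k + 1), MeasurableSpace.comap (D l) inferInstance)

theorem historySigmaAlgebra_le [mΩ : MeasurableSpace Ω] {X : ℕ → Ω → α} {D : ℕ → Ω → β}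
    (hX : ∀ l, Measurable (X l)) (hD : ∀ l, Measurable (D l)) (k : ℕ) :
    historySigmaAlgebra X D k ≤ mΩ :=
  sup_le (iSup₂_le fun l _ => (hX l).comap_le) (iSup₂_le fun l _ => (hD l).comap_le)

theorem measurable_historySigmaAlgebra (X : ℕ → Ω → α) (D : ℕ → Ω → β) {k l : ℕ} (hl : l ≤ k) :
    Measurable[historySigmaAlgebra X D k] (X l) :=
  Measurable.of_comap_le (le_sup_of_le_left (le_iSup₂_of_le l (by simpa using hl) le_rfl))

end History

theorem expected_delay_bound_general
    (N : ℕ)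
    (Ω : Type) [MeasurableSpace Ω] (μ : Measure Ω)
    (X : ℕ → Ω → EuclideanSpace ℝ (Fin N)) (hXm : ∀ k, Measurable (X k))
    (jv : ℕ → Ω → Fin N → ℕ) (hjvm : ∀ k, Measurable (jv k))
    (hjk : ∀ k ω i, jv k ω i ≤ k)
    (xhat : ℕ → Ω → EuclideanSpace ℝ (Fin N))
    (hxhat : ∀ k ω i, xhat k ω i = X (k - jv k ω i) ω i)
    (p : ℕ → ℝ) (hp : ∀ j, 0 ≤ p j)
    (hpbound : ∀ k j : ℕ, ∀ A : Set Ω,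
      MeasurableSet[(⨆ l ∈ Finset.range (k+1), MeasurableSpace.comap (X l) inferInstance) ⊔
        (⨆ l ∈ Finset.range (k+1), MeasurableSpace.comap (jv l) inferInstance)] A →
      μ (A ∩ {ω | Finset.univ.sup (jv k ω) = j}) ≤ ENNReal.ofReal (p j) * μ A)
    (s cf : ℕ → ℝ)
    (hs : ∀ l : ℕ, HasSum (fun j : ℕ => if l ≤ j then (j : ℝ) * p j else 0) (s l))
    (hcf : ∀ i : ℕ, HasSum (fun l : ℕ => if i ≤ l then s l else 0) (cf i))
    (hID2 : ∀ k, Integrable (fun ω => ‖X (k+1) ω - X k ω‖ ^ 2) μ)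
    :
    ∀ k : ℕ,
      ∫ ω, ‖X k ω - xhat k ω‖ ^ 2 ∂μ
        ≤ ∑ i ∈ Finset.range k, cf (k - 1 - i) * ∫ ω, ‖X (i+1) ω - X i ω‖ ^ 2 ∂μ := by
  intro k
  have hΔ : ∀ i < k, Measurable[historySigmaAlgebra X jv k]
      fun ω => ‖X (i + 1) ω - X i ω‖ ^ 2 := fun i hi =>
    (measurable_norm.comp ((measurable_historySigmaAlgebra X jv hi).sub
      (measurable_historySigmaAlgebra X jv hi.le))).pow_const 2
  calc ∫ ω, ‖X k ω - xhat k ω‖ ^ 2 ∂μ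
      ≤ ∑ j ∈ range (k + 1), p j *
          ∫ ω, (j : ℝ) * ∑ i ∈ Ico (k - j) k, ‖X (i + 1) ω - X i ω‖ ^ 2 ∂μ :=
        integral_le_sum_mul_integral_of_le_comp (historySigmaAlgebra_le hXm hjvm k) (by fun_prop)
          (fun ω => Finset.sup_le fun i _ => hjk k ω i) hp (hpbound k)
          (fun j ω => by positivity)
          (fun j => (Finset.measurable_sum _ fun i hi => hΔ i (mem_Ico.1 hi).2).const_mul _)
          (fun j => (integrable_finsetSum _ fun i _ => hID2 i).const_mul _)
          (fun ω => sq_nonneg _)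
          (fun ω => norm_sub_delayed_sq_le (X · ω) (jv k ω)
            (fun i => Finset.le_sup (mem_univ i)) (hxhat k ω))
    _ = ∑ j ∈ range (k + 1), p j *
          (j * ∑ i ∈ Ico (k - j) k, ∫ ω, ‖X (i + 1) ω - X i ω‖ ^ 2 ∂μ) := by
        simp only [integral_const_mul, integral_finsetSum _ fun i _ => hID2 i]
    _ ≤ ∑ i ∈ range k, cf (k - 1 - i) * ∫ ω, ‖X (i + 1) ω - X i ω‖ ^ 2 ∂μ :=
        sum_delay_mul_window_sum_le hp (fun i => integral_nonneg fun ω => sq_nonneg _) hs hcf k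

theorem expected_delay_bound
    (N : ℕ) (hN : 0 < N)
    (f : EuclideanSpace ℝ (Fin N) → ℝ)
    (L : ℝ) (hL : 0 < L)
    (hdiff : Differentiable ℝ f)
    (hlip : ∀ y z : EuclideanSpace ℝ (Fin N), ‖gradient f y - gradient f z‖ ≤ L * ‖y - z‖)
    (fmin : ℝ) (hfmin : ∀ y, fmin ≤ f y)
    (Ω : Type) [MeasurableSpace Ω] (μ : Measure Ω) [IsProbabilityMeasure μ]
    (X : ℕ → Ω → EuclideanSpace ℝ (Fin N)) (hXm : ∀ k, Measurable (X k))
    (jv : ℕ → Ω → Fin N → ℕ) (hjvm : ∀ k, Measurable (jv k))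
    (hjk : ∀ k ω i, jv k ω i ≤ k)
    (xhat : ℕ → Ω → EuclideanSpace ℝ (Fin N))
    (hxhat : ∀ k ω i, xhat k ω i = X (k - jv k ω i) ω i)
    (ik : ℕ → Ω → Fin N) (hikm : ∀ k, Measurable (ik k))
    (p : ℕ → ℝ) (hp : ∀ j, 0 ≤ p j)
    (hpbound : ∀ k j : ℕ, ∀ A : Set Ω,
      MeasurableSet[(⨆ l ∈ Finset.range (k+1), MeasurableSpace.comap (X l) inferInstance) ⊔
        (⨆ l ∈ Finset.range (k+1), MeasurableSpace.comap (jv l) inferInstance)] A →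
      μ (A ∩ {ω | Finset.univ.sup (jv k ω) = j}) ≤ ENNReal.ofReal (p j) * μ A)
    (s cf : ℕ → ℝ)
    (hs : ∀ l : ℕ, HasSum (fun j : ℕ => if l ≤ j then (j : ℝ) * p j else 0) (s l))
    (hcf : ∀ i : ℕ, HasSum (fun l : ℕ => if i ≤ l then s l else 0) (cf i))
    (γ : ℝ) (hγ : 0 < γ)
    (hupd : ∀ k ω, X (k+1) ω (ik k ω) = X k ω (ik k ω) - (γ / L) * gradient f (xhat k ω) (ik k ω))
    (hfix : ∀ k ω i, i ≠ ik k ω → X (k+1) ω i = X k ω i)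
    (hIf : ∀ k, Integrable (fun ω => f (X k ω)) μ)
    (hID2 : ∀ k, Integrable (fun ω => ‖X (k+1) ω - X k ω‖ ^ 2) μ)
    (hId2 : ∀ k, Integrable (fun ω => ‖X k ω - xhat k ω‖ ^ 2) μ)
    :
    ∀ k : ℕ,
      ∫ ω, ‖X k ω - xhat k ω‖ ^ 2 ∂μ
        ≤ ∑ i ∈ Finset.range k, cf (k - 1 - i) * ∫ ω, ‖X (i+1) ω - X i ω‖ ^ 2 ∂μ :=
  expected_delay_bound_general N Ω μ X hXm jv hjvm hjk xhat hxhat p hp hpbound s cf hs hcf hID2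
end

section
/- (Sufficient descent for deterministic unbounded delays.) The Lyapunov function H_k := f(x^k) + (L/2)·Σ_{i=1}^{∞} κ_i‖Δ^{k−i}‖₂² satisfies H_k − H_{k+1} ≥ L·(1/γ_k − D_{j(k)})·‖Δ^k‖₂² for all k, and lim_{k→∞} ‖Δ^k‖₂ = 0. Moreover, for any T ≥ liminf_k j(k), along the subsequence Q_T := {k ∈ ℕ : j(k) ≤ T} one has lim_{(k∈Q_T)→∞} ‖d^k‖₂ = 0 and lim_{(k∈Q_T)→∞} ‖∇_{i_k} f(x̂^k)‖₂ = 0. -/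
open MeasureTheory Filter
open scoped BigOperators

/-!
Since `Δ^k = -(γ_k/L) ∇_{i_k} f(x̂^k) e_{i_k}`, we have `⟨∇f(x̂^k), Δ^k⟩ = -(L/γ_k)‖Δ^k‖²`, so the
descent lemma gives `f(x^k) - f(x^{k+1}) ≥ (L/γ_k - L/2)‖Δ^k‖² - L‖d^k‖‖Δ^k‖`, where
`‖d^k‖ ≤ Σ_{t ≤ j(k)} ‖Δ^{k-t}‖`. Young's inequality with weights `ε_t` splits the cross term into
`(L/2) Σ_t ε_t‖Δ^{k-t}‖²`, which the weights `κ_t - κ_{t+1} = ε_t` of the Lyapunov tail absorb, and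
a multiple of `‖Δ^k‖²` accounted for in `D_{j(k)}`. With `γ_k = c / D_{j(k)}` and `D ≥ 1/2` the
decrease is at least `L(1-c)/(2c)‖Δ^k‖²`, so these squares are summable. Along `Q_T` both `‖d^k‖`
and `|∇_{i_k} f(x̂^k)| = (L/γ_k)‖Δ^k‖` are bounded by fixed multiples of finitely many recent
increments.
-/

section Descent

open Finset

variable {E : Type*} [NormedAddCommGroup E] [InnerProductSpace ℝ E] [CompleteSpace E]
  {f : E → ℝ} {L : ℝ}

theorem image_add_le_of_lipschitz_gradient (hdiff : Differentiable ℝ f)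
    (hlip : ∀ y z : E, ‖gradient f y - gradient f z‖ ≤ L * ‖y - z‖) (x v : E) :
    f (x + v) ≤ f x + inner ℝ (gradient f x) v + L / 2 * ‖v‖ ^ 2 := by
  let g : ℝ → ℝ := fun t =>
    f (x + t • v) - t * inner ℝ (gradient f x) v - L / 2 * ‖v‖ ^ 2 * t ^ 2
  have hg : ∀ t : ℝ, HasDerivAt g
      (inner ℝ (gradient f (x + t • v)) v - inner ℝ (gradient f x) v - L * ‖v‖ ^ 2 * t) t := by
    intro t
    have hline : HasDerivAt (fun t : ℝ => x + t • v) v t := by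
      simpa using ((hasDerivAt_id t).smul_const v).const_add x
    have hf := (hdiff (x + t • v)).hasGradientAt.hasFDerivAt.comp_hasDerivAt t hline
    refine ((hf.sub ((hasDerivAt_id t).mul_const (inner ℝ (gradient f x) v))).sub
      ((hasDerivAt_pow 2 t).const_mul (L / 2 * ‖v‖ ^ 2))).congr_deriv ?_
    rw [InnerProductSpace.toDual_apply_apply]
    push_cast
    ring
  have hanti : AntitoneOn g (Set.Ici 0) := by
    refine antitoneOn_of_hasDerivWithinAt_nonpos (convex_Ici 0)
      (fun t _ => (hg t).continuousAt.continuousWithinAt) (fun t _ => (hg t).hasDerivWithinAt) ?_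
    intro t ht
    rw [interior_Ici, Set.mem_Ioi] at ht
    have : inner ℝ (gradient f (x + t • v)) v - inner ℝ (gradient f x) v ≤ L * ‖v‖ ^ 2 * t :=
      calc inner ℝ (gradient f (x + t • v)) v - inner ℝ (gradient f x) v
          = inner ℝ (gradient f (x + t • v) - gradient f x) v := (inner_sub_left _ _ _).symm
        _ ≤ ‖gradient f (x + t • v) - gradient f x‖ * ‖v‖ := real_inner_le_norm _ _
        _ ≤ L * ‖x + t • v - x‖ * ‖v‖ := by gcongr; exact hlip _ _
        _ = L * ‖v‖ ^ 2 * t := by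
          rw [add_sub_cancel_left, norm_smul, Real.norm_of_nonneg ht.le]; ring
    linarith
  have := hanti Set.self_mem_Ici (Set.mem_Ici.2 zero_le_one) zero_le_one
  simp only [g, zero_smul, add_zero, zero_mul, one_smul, one_mul, one_pow, mul_one] at this
  linarith

theorem mul_le_half_mul_sq_add_inv (ε A B : ℝ) (hε : 0 < ε) :
    A * B ≤ ε / 2 * A ^ 2 + 1 / (2 * ε) * B ^ 2 := by
  have h : ε / 2 * A ^ 2 + 1 / (2 * ε) * B ^ 2 - A * B = (ε * A - B) ^ 2 / (2 * ε) := by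
    field_simp; ring
  nlinarith [h, show 0 ≤ (ε * A - B) ^ 2 / (2 * ε) by positivity]

theorem sub_image_add_ge_of_delayed_gradient_step (hL : 0 ≤ L) (hdiff : Differentiable ℝ f)
    (hlip : ∀ y z : E, ‖gradient f y - gradient f z‖ ≤ L * ‖y - z‖) {x xh Δ : E} {γ : ℝ}
    (hstep : inner ℝ (gradient f xh) Δ = -(L / γ) * ‖Δ‖ ^ 2) {ι : Type*} {s : Finset ι}
    {ε b : ι → ℝ} (hε : ∀ t ∈ s, 0 < ε t) (hd : ‖x - xh‖ ≤ ∑ t ∈ s, b t) :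
    L * (1 / γ - 1 / 2 - ∑ t ∈ s, 1 / (2 * ε t)) * ‖Δ‖ ^ 2 - L / 2 * ∑ t ∈ s, ε t * b t ^ 2
      ≤ f x - f (x + Δ) := by
  have hcross : inner ℝ (gradient f x - gradient f xh) Δ
      ≤ L * (1 / 2 * ∑ t ∈ s, ε t * b t ^ 2 + (∑ t ∈ s, 1 / (2 * ε t)) * ‖Δ‖ ^ 2) :=
    calc inner ℝ (gradient f x - gradient f xh) Δ
        ≤ ‖gradient f x - gradient f xh‖ * ‖Δ‖ := real_inner_le_norm _ _
      _ ≤ L * ∑ t ∈ s, b t * ‖Δ‖ := by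
        rw [← sum_mul, ← mul_assoc]
        gcongr
        exact (hlip x xh).trans (by gcongr)
      _ ≤ L * ∑ t ∈ s, (ε t / 2 * b t ^ 2 + 1 / (2 * ε t) * ‖Δ‖ ^ 2) := by
        gcongr with t ht
        exact mul_le_half_mul_sq_add_inv (ε t) _ _ (hε t ht)
      _ = _ := by
        rw [sum_add_distrib, ← sum_mul, mul_sum]
        congr 3 with t
        ring
  have hsplit : inner ℝ (gradient f x) Δ
      = inner ℝ (gradient f xh) Δ + inner ℝ (gradient f x - gradient f xh) Δ := by
    rw [inner_sub_left]; ring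
  linear_combination image_add_le_of_lipschitz_gradient hdiff hlip x Δ + hcross + hsplit + hstep

end Descent

section Sums

open Finset

theorem sub_eq_sum_Icc_sub_of_le {G : Type*} [AddCommGroup G] (a : ℕ → G) {k j : ℕ} (hj : j ≤ k) :
    a k - a (k - j) = ∑ t ∈ Icc 1 j, (a (k - t + 1) - a (k - t)) := by
  induction j with
  | zero => simp
  | succ j ih =>
    rw [sum_Icc_succ_top (by omega), ← ih (by omega), show k - (j + 1) + 1 = k - j by omega]
    abel

theorem sum_Icc_one_eq_sum_range {M : Type*} [AddCommMonoid M] (g : ℕ → M) (n : ℕ) :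
    ∑ i ∈ Icc 1 n, g i = ∑ i ∈ range n, g (i + 1) := by
  rw [← Ico_add_one_right_eq_Icc, sum_Ico_eq_sum_range]
  simp [add_comm]

theorem sum_Icc_mul_sub_sum_Icc_succ_mul (κ ε a : ℕ → ℝ) (hκε : ∀ i, κ i - κ (i + 1) = ε i)
    (k : ℕ) :
    ∑ i ∈ Icc 1 k, κ i * a (k - i) - ∑ i ∈ Icc 1 (k + 1), κ i * a (k + 1 - i)
      = ∑ i ∈ Icc 1 k, ε i * a (k - i) - κ 1 * a k := by
  simp only [sum_Icc_one_eq_sum_range, sum_range_succ' _ k, ← hκε, sub_mul, sum_sub_distrib]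
  simp only [Nat.add_sub_add_right, zero_add, Nat.add_sub_cancel]
  ring

theorem sub_succ_eq_of_hasSum_tail {ε κ : ℕ → ℝ}
    (hκ : ∀ i, HasSum (fun j => if i ≤ j then ε j else 0) (κ i)) (i : ℕ) :
    κ i - κ (i + 1) = ε i := by
  have hsingle : (fun j => (if i ≤ j then ε j else 0) - if i + 1 ≤ j then ε j else 0)
      = fun j => if j = i then ε i else 0 := by
    funext j
    rcases lt_trichotomy j i with h | rfl | h
    · simp [h.ne, show ¬ i ≤ j by omega, show ¬ i + 1 ≤ j by omega]
    · simp
    · simp [h.ne', h.le, show i + 1 ≤ j by omega]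
  exact ((hκ i).sub (hκ (i + 1))).unique (hsingle ▸ hasSum_ite_eq i (ε i))

theorem nonneg_of_hasSum_tail {ε κ : ℕ → ℝ} (hε : ∀ j, 0 ≤ ε j)
    (hκ : ∀ i, HasSum (fun j => if i ≤ j then ε j else 0) (κ i)) (i : ℕ) : 0 ≤ κ i :=
  (hκ i).nonneg fun j => by split_ifs <;> simp [hε]

theorem tendsto_norm_sub_succ_of_le_sub_succ {E : Type*} [NormedAddCommGroup E] {x : ℕ → E}
    {H : ℕ → ℝ} {m ρ : ℝ} (hρ : 0 < ρ) (hH : ∀ k, m ≤ H k)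
    (hdec : ∀ k, ρ * ‖x (k + 1) - x k‖ ^ 2 ≤ H k - H (k + 1)) :
    Tendsto (fun k => ‖x (k + 1) - x k‖) atTop (nhds 0) := by
  have hsum : Summable fun k => ρ * ‖x (k + 1) - x k‖ ^ 2 := by
    refine summable_of_sum_range_le (c := H 0 - m) (fun k => by positivity) fun n => ?_
    calc ∑ k ∈ range n, ρ * ‖x (k + 1) - x k‖ ^ 2 ≤ ∑ k ∈ range n, (H k - H (k + 1)) :=
          sum_le_sum fun k _ => hdec k
      _ = H 0 - H n := sum_range_sub' H n
      _ ≤ H 0 - m := by linarith [hH n]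
  simpa [hρ.ne', Real.sqrt_sq (norm_nonneg _)] using
    ((hsum.tendsto_atTop_zero.const_mul ρ⁻¹).sqrt)

end Sums

section EuclideanSpace

open Finset

variable {ι : Type*}

theorem EuclideanSpace.sub_eq_single_of_forall_ne [DecidableEq ι] {x y : EuclideanSpace ℝ ι}
    {i : ι} (h : ∀ j ≠ i, y j = x j) : y - x = EuclideanSpace.single i (y i - x i) := by
  ext j
  by_cases hj : j = i
  · subst hj; simp
  · simp [hj, h j hj]

variable [Fintype ι]

theorem EuclideanSpace.norm_le_sum_norm_of_abs_le_s18 {κ : Type*} (s : Finset κ)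
    (x : EuclideanSpace ℝ ι) (y : κ → EuclideanSpace ℝ ι) (h : ∀ i, |x i| ≤ ∑ t ∈ s, |y t i|) :
    ‖x‖ ≤ ∑ t ∈ s, ‖y t‖ := by
  let absY : κ → EuclideanSpace ℝ ι := fun t => WithLp.toLp 2 fun i => |y t i|
  calc ‖x‖ ≤ ‖∑ t ∈ s, absY t‖ := by
        rw [EuclideanSpace.norm_eq, EuclideanSpace.norm_eq]
        gcongr with i
        simp only [Real.norm_eq_abs, WithLp.ofLp_sum, Finset.sum_apply, absY]
        exact (h i).trans (le_abs_self _)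
    _ ≤ ∑ t ∈ s, ‖absY t‖ := norm_sum_le _ _
    _ = ∑ t ∈ s, ‖y t‖ := by simp [absY, EuclideanSpace.norm_eq]

theorem EuclideanSpace.inner_single_neg_mul_apply [DecidableEq ι] (u : EuclideanSpace ℝ ι)
    (i : ι) {s : ℝ} (hs : s ≠ 0) :
    inner ℝ u (EuclideanSpace.single i (-(s * u i)))
      = -(1 / s) * ‖EuclideanSpace.single i (-(s * u i))‖ ^ 2 := by
  rw [EuclideanSpace.inner_single_right, conj_trivial, PiLp.norm_single, Real.norm_eq_abs, sq_abs]
  field_simp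

theorem norm_sub_delayed_le_sum_norm_sub_s18 (x : ℕ → EuclideanSpace ℝ ι) {k M : ℕ} {j : ι → ℕ}
    (hjk : ∀ i, j i ≤ k) (hjM : ∀ i, j i ≤ M) {y : EuclideanSpace ℝ ι}
    (hy : ∀ i, y i = x (k - j i) i) :
    ‖x k - y‖ ≤ ∑ t ∈ Icc 1 M, ‖x (k - t + 1) - x (k - t)‖ := by
  refine EuclideanSpace.norm_le_sum_norm_of_abs_le_s18 _ _ _ fun i => ?_
  calc |(x k - y) i| = |∑ t ∈ Icc 1 (j i), (x (k - t + 1) i - x (k - t) i)| := by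
        rw [PiLp.sub_apply, hy, sub_eq_sum_Icc_sub_of_le (fun s => x s i) (hjk i)]
    _ ≤ ∑ t ∈ Icc 1 (j i), |x (k - t + 1) i - x (k - t) i| := abs_sum_le_sum_abs _ _
    _ ≤ ∑ t ∈ Icc 1 M, |(x (k - t + 1) - x (k - t)) i| :=
        sum_le_sum_of_subset_of_nonneg (Icc_subset_Icc_right (hjM i)) fun _ _ _ => abs_nonneg _

theorem tendsto_norm_sub_delayed (x : ℕ → EuclideanSpace ℝ ι)
    (hx : Tendsto (fun k => ‖x (k + 1) - x k‖) atTop (nhds 0)) {j : ℕ → ι → ℕ}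
    (hjk : ∀ k i, j k i ≤ k) {y : ℕ → EuclideanSpace ℝ ι} (hy : ∀ k i, y k i = x (k - j k i) i)
    (T : ℕ) :
    Tendsto (fun k => ‖x k - y k‖) (atTop ⊓ principal {k | univ.sup (j k) ≤ T}) (nhds 0) := by
  have hsum : Tendsto (fun k => ∑ t ∈ Icc 1 T, ‖x (k - t + 1) - x (k - t)‖) atTop (nhds 0) := by
    simpa using tendsto_finsetSum (Icc 1 T) fun t _ => hx.comp (tendsto_sub_atTop_nat t)
  refine squeeze_zero' (Eventually.of_forall fun k => norm_nonneg _) ?_ (hsum.mono_left inf_le_left)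
  refine eventually_inf_principal.2 (Eventually.of_forall fun k hk => ?_)
  exact norm_sub_delayed_le_sum_norm_sub_s18 x (hjk k) (fun i => (le_sup (mem_univ i)).trans hk) (hy k)

end EuclideanSpace

section AsyncBCD

open Finset

variable {E : Type*} [NormedAddCommGroup E]

-- `H_k` of the paper: the terms with `i > k` vanish because `Δ^{k-i} = 0` there.
noncomputable def delayLyapunov (f : E → ℝ) (L : ℝ) (κ : ℕ → ℝ) (x : ℕ → E) (k : ℕ) : ℝ :=
  f (x k) + L / 2 * ∑ i ∈ Icc 1 k, κ i * ‖x (k - i + 1) - x (k - i)‖ ^ 2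

theorem le_delayLyapunov {f : E → ℝ} {L : ℝ} (hL : 0 ≤ L) {κ : ℕ → ℝ} (hκ : ∀ i, 0 ≤ κ i)
    (x : ℕ → E) (k : ℕ) : f (x k) ≤ delayLyapunov f L κ x k := by
  have : 0 ≤ ∑ i ∈ Icc 1 k, κ i * ‖x (k - i + 1) - x (k - i)‖ ^ 2 :=
    sum_nonneg fun i _ => mul_nonneg (hκ i) (sq_nonneg _)
  unfold delayLyapunov
  nlinarith

-- `D_m` of the paper.
noncomputable def delayConstant (ε κ : ℕ → ℝ) (m : ℕ) : ℝ :=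
  1 / 2 + κ 1 / 2 + ∑ i ∈ Icc 1 m, 1 / (2 * ε i)

theorem half_le_delayConstant {ε κ : ℕ → ℝ} (hε : ∀ i, 0 < ε i) (hκ : 0 ≤ κ 1) (m : ℕ) :
    1 / 2 ≤ delayConstant ε κ m := by
  have : 0 ≤ ∑ i ∈ Icc 1 m, 1 / (2 * ε i) := sum_nonneg fun i _ => by have := hε i; positivity
  unfold delayConstant
  linarith

theorem delayConstant_mono {ε : ℕ → ℝ} (hε : ∀ i, 0 < ε i) (κ : ℕ → ℝ) :
    Monotone (delayConstant ε κ) := monotone_nat_of_le_succ fun m => by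
  have : 0 < 1 / (2 * ε (m + 1)) := by have := hε (m + 1); positivity
  unfold delayConstant
  rw [sum_Icc_succ_top (by omega)]
  linarith

theorem one_sub_div_two_mul_le_div_sub_self {c D : ℝ} (hc : 0 < c) (hc1 : c ≤ 1) (hD : 1 / 2 ≤ D) :
    (1 - c) / (2 * c) ≤ D / c - D := by
  have : 0 ≤ (1 - c) / c := div_nonneg (by linarith) hc.le
  calc (1 - c) / (2 * c) = 1 / 2 * ((1 - c) / c) := by ring
    _ ≤ D * ((1 - c) / c) := by gcongr
    _ = D / c - D := by field_simp

variable {ι : Type*} [DecidableEq ι]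

theorem sub_eq_single_of_coordinate_step {x y u : EuclideanSpace ℝ ι} {i : ι} {s : ℝ}
    (hupd : y i = x i - s * u i) (hfix : ∀ j ≠ i, y j = x j) :
    y - x = EuclideanSpace.single i (-(s * u i)) := by
  rw [EuclideanSpace.sub_eq_single_of_forall_ne hfix, hupd]
  congr 1
  ring

variable [Fintype ι]

theorem norm_apply_eq_of_coordinate_step {x y u : EuclideanSpace ℝ ι} {i : ι} {L γ : ℝ}
    (hL : 0 < L) (hγ : 0 < γ) (hupd : y i = x i - γ / L * u i) (hfix : ∀ j ≠ i, y j = x j) :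
    ‖u i‖ = L / γ * ‖y - x‖ := by
  rw [sub_eq_single_of_coordinate_step hupd hfix, PiLp.norm_single, norm_neg, norm_mul,
    Real.norm_of_nonneg (div_pos hγ hL).le]
  field_simp

theorem delayLyapunov_sub_succ_ge {f : EuclideanSpace ℝ ι → ℝ} {L : ℝ} (hL : 0 < L)
    (hdiff : Differentiable ℝ f)
    (hlip : ∀ y z : EuclideanSpace ℝ ι, ‖gradient f y - gradient f z‖ ≤ L * ‖y - z‖)
    {ε κ : ℕ → ℝ} (hε : ∀ i, 0 < ε i)
    (hκ : ∀ i, HasSum (fun j => if i ≤ j then ε j else 0) (κ i))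
    (x : ℕ → EuclideanSpace ℝ ι) {k : ℕ} {i : ι} {j : ι → ℕ} (hjk : ∀ i, j i ≤ k)
    {xh : EuclideanSpace ℝ ι} (hxh : ∀ i, xh i = x (k - j i) i) {γ : ℝ} (hγ : γ ≠ 0)
    (hupd : x (k + 1) i = x k i - γ / L * gradient f xh i)
    (hfix : ∀ i' ≠ i, x (k + 1) i' = x k i') :
    L * (1 / γ - delayConstant ε κ (univ.sup j)) * ‖x (k + 1) - x k‖ ^ 2
      ≤ delayLyapunov f L κ x k - delayLyapunov f L κ x (k + 1) := by
  have hstep : inner ℝ (gradient f xh) (x (k + 1) - x k) = -(L / γ) * ‖x (k + 1) - x k‖ ^ 2 := by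
    rw [sub_eq_single_of_coordinate_step hupd hfix,
      EuclideanSpace.inner_single_neg_mul_apply _ _ (div_ne_zero hγ hL.ne'), one_div_div]
  have hdescent := sub_image_add_ge_of_delayed_gradient_step hL.le hdiff hlip hstep
    (fun t _ => hε t) (norm_sub_delayed_le_sum_norm_sub_s18 x hjk (fun i => le_sup (mem_univ i)) hxh)
  rw [add_sub_cancel] at hdescent
  have htail := sum_Icc_mul_sub_sum_Icc_succ_mul κ ε (fun s => ‖x (s + 1) - x s‖ ^ 2)
    (sub_succ_eq_of_hasSum_tail hκ) k
  have hdelay : ∑ t ∈ Icc 1 (univ.sup j), ε t * ‖x (k - t + 1) - x (k - t)‖ ^ 2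
      ≤ ∑ t ∈ Icc 1 k, ε t * ‖x (k - t + 1) - x (k - t)‖ ^ 2 :=
    sum_le_sum_of_subset_of_nonneg (Icc_subset_Icc_right (Finset.sup_le fun i _ => hjk i))
      fun t _ _ => mul_nonneg (hε t).le (sq_nonneg _)
  unfold delayLyapunov delayConstant
  linear_combination hdescent - L / 2 * htail + L / 2 * hdelay

end AsyncBCD

theorem sufficient_descent_deterministic_unbounded_general
    (N : ℕ)
    (f : EuclideanSpace ℝ (Fin N) → ℝ)
    (L : ℝ) (hL : 0 < L)
    (hdiff : Differentiable ℝ f)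
    (hlip : ∀ y z : EuclideanSpace ℝ (Fin N), ‖gradient f y - gradient f z‖ ≤ L * ‖y - z‖)
    (fmin : ℝ) (hfmin : ∀ y, fmin ≤ f y)
    (x : ℕ → EuclideanSpace ℝ (Fin N))
    (ik : ℕ → Fin N)
    (jv : ℕ → Fin N → ℕ)
    (hjk : ∀ k i, jv k i ≤ k)
    (xhat : ℕ → EuclideanSpace ℝ (Fin N))
    (hxhat : ∀ k i, xhat k i = x (k - jv k i) i)
    (εs : ℕ → ℝ) (hεs : ∀ i, 0 < εs i)
    (κ : ℕ → ℝ) (hκ : ∀ i : ℕ, HasSum (fun j : ℕ => if i ≤ j then εs j else 0) (κ i))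
    (Dd : ℕ → ℝ) (hDd : ∀ m : ℕ, Dd m = 1 / 2 + κ 1 / 2 + ∑ i ∈ Finset.Icc 1 m, 1 / (2 * εs i))
    (c : ℝ) (hc : 0 < c) (hc1 : c < 1)
    (γ : ℕ → ℝ) (hγ : ∀ k, γ k = c / Dd (Finset.univ.sup (jv k)))
    (hupd : ∀ k, x (k+1) (ik k) = x k (ik k) - (γ k / L) * gradient f (xhat k) (ik k))
    (hfix : ∀ k i, i ≠ ik k → x (k+1) i = x k i)
    :
    (∀ k : ℕ,
      (f (x k) + (L / 2) * ∑ i ∈ Finset.Icc 1 k, κ i * ‖x (k - i + 1) - x (k - i)‖ ^ 2)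
        - (f (x (k+1)) + (L / 2) * ∑ i ∈ Finset.Icc 1 (k+1), κ i * ‖x (k + 1 - i + 1) - x (k + 1 - i)‖ ^ 2)
        ≥ L * (1 / γ k - Dd (Finset.univ.sup (jv k))) * ‖x (k+1) - x k‖ ^ 2) ∧
    Tendsto (fun k => ‖x (k+1) - x k‖) atTop (nhds 0) ∧
    (∀ T : ℕ, (∃ᶠ k in atTop, Finset.univ.sup (jv k) ≤ T) →
      Tendsto (fun k => ‖x k - xhat k‖)
        (atTop ⊓ Filter.principal {k | Finset.univ.sup (jv k) ≤ T}) (nhds 0) ∧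
      Tendsto (fun k => ‖gradient f (xhat k) (ik k)‖)
        (atTop ⊓ Filter.principal {k | Finset.univ.sup (jv k) ≤ T}) (nhds 0)) := by
  obtain rfl : Dd = delayConstant εs κ := funext hDd
  have hκ_nonneg := nonneg_of_hasSum_tail (fun j => (hεs j).le) hκ
  have hD_ge := half_le_delayConstant hεs (hκ_nonneg 1)
  have hγ_pos : ∀ k, 0 < γ k := fun k =>
    hγ k ▸ div_pos hc (by linarith [hD_ge (Finset.univ.sup (jv k))])
  have hdescent : ∀ k, L * (1 / γ k - delayConstant εs κ (Finset.univ.sup (jv k)))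
      * ‖x (k + 1) - x k‖ ^ 2 ≤ delayLyapunov f L κ x k - delayLyapunov f L κ x (k + 1) := fun k =>
    delayLyapunov_sub_succ_ge hL hdiff hlip hεs hκ x (hjk k) (hxhat k) (hγ_pos k).ne'
      (hupd k) (hfix k)
  have hΔ_lim := tendsto_norm_sub_succ_of_le_sub_succ (x := x) (m := fmin)
    (by have := sub_pos.2 hc1; positivity : 0 < L * ((1 - c) / (2 * c)))
    (fun k => (hfmin _).trans (le_delayLyapunov hL.le hκ_nonneg x k))
    fun k => (hdescent k).trans' <| by
      rw [hγ k, one_div_div]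
      gcongr
      exact one_sub_div_two_mul_le_div_sub_self hc hc1.le (hD_ge _)
  refine ⟨hdescent, hΔ_lim, fun T _ => ⟨tendsto_norm_sub_delayed x hΔ_lim hjk hxhat T, ?_⟩⟩
  have hbound : ∀ k, Finset.univ.sup (jv k) ≤ T → ‖gradient f (xhat k) (ik k)‖
      ≤ L * delayConstant εs κ T / c * ‖x (k + 1) - x k‖ := fun k hk => by
    rw [norm_apply_eq_of_coordinate_step hL (hγ_pos k) (hupd k) (hfix k), hγ k, div_div_eq_mul_div]
    gcongr
    exact delayConstant_mono hεs κ hk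
  refine squeeze_zero' (Eventually.of_forall fun k => norm_nonneg _)
    (eventually_inf_principal.2 (Eventually.of_forall hbound)) (Tendsto.mono_left ?_ inf_le_left)
  simpa using hΔ_lim.const_mul (L * delayConstant εs κ T / c)

theorem sufficient_descent_deterministic_unbounded
    (N : ℕ) (hN : 0 < N)
    (f : EuclideanSpace ℝ (Fin N) → ℝ)
    (L : ℝ) (hL : 0 < L)
    (hdiff : Differentiable ℝ f)
    (hlip : ∀ y z : EuclideanSpace ℝ (Fin N), ‖gradient f y - gradient f z‖ ≤ L * ‖y - z‖)
    (fmin : ℝ) (hfmin : ∀ y, fmin ≤ f y)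
    (x : ℕ → EuclideanSpace ℝ (Fin N))
    (ik : ℕ → Fin N)
    (jv : ℕ → Fin N → ℕ)
    (hjk : ∀ k i, jv k i ≤ k)
    (xhat : ℕ → EuclideanSpace ℝ (Fin N))
    (hxhat : ∀ k i, xhat k i = x (k - jv k i) i)
    (εs : ℕ → ℝ) (hεs : ∀ i, 0 < εs i)
    (κ : ℕ → ℝ) (hκ : ∀ i : ℕ, HasSum (fun j : ℕ => if i ≤ j then εs j else 0) (κ i))
    (Dd : ℕ → ℝ) (hDd : ∀ m : ℕ, Dd m = 1 / 2 + κ 1 / 2 + ∑ i ∈ Finset.Icc 1 m, 1 / (2 * εs i))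
    (c : ℝ) (hc : 0 < c) (hc1 : c < 1)
    (γ : ℕ → ℝ) (hγ : ∀ k, γ k = c / Dd (Finset.univ.sup (jv k)))
    (hliminf : ∃ T0 : ℕ, ∃ᶠ k in atTop, Finset.univ.sup (jv k) ≤ T0)
    (hupd : ∀ k, x (k+1) (ik k) = x k (ik k) - (γ k / L) * gradient f (xhat k) (ik k))
    (hfix : ∀ k i, i ≠ ik k → x (k+1) i = x k i)
    :
    (∀ k : ℕ,
      (f (x k) + (L / 2) * ∑ i ∈ Finset.Icc 1 k, κ i * ‖x (k - i + 1) - x (k - i)‖ ^ 2)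
        - (f (x (k+1)) + (L / 2) * ∑ i ∈ Finset.Icc 1 (k+1), κ i * ‖x (k + 1 - i + 1) - x (k + 1 - i)‖ ^ 2)
        ≥ L * (1 / γ k - Dd (Finset.univ.sup (jv k))) * ‖x (k+1) - x k‖ ^ 2) ∧
    Tendsto (fun k => ‖x (k+1) - x k‖) atTop (nhds 0) ∧
    (∀ T : ℕ, (∃ᶠ k in atTop, Finset.univ.sup (jv k) ≤ T) →
      Tendsto (fun k => ‖x k - xhat k‖)
        (atTop ⊓ Filter.principal {k | Finset.univ.sup (jv k) ≤ T}) (nhds 0) ∧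
      Tendsto (fun k => ‖gradient f (xhat k) (ik k)‖)
        (atTop ⊓ Filter.principal {k | Finset.univ.sup (jv k) ≤ T}) (nhds 0)) :=
  sufficient_descent_deterministic_unbounded_general N f L hL hdiff hlip fmin hfmin x ik jv hjk xhat
    hxhat εs hεs κ hκ Dd hDd c hc hc1 γ hγ hupd hfix
end
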